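/- arXiv:math/0509690 — 10 statements merged into one kernel-verified Lean document; each statement's English description precedes it below -/
import Mathlib

section
/- Let (E,d) be a compact metric space, let c > 1, and let g : [0,∞) → [0,∞) be a monotone increasing continuous function with g(0) = 0 and g(2r) ≤ c·g(r) for every r ≥ 0. Let μ be a finite Borel measure on E and let A be a Borel subset of E. If for every x ∈ A one has limsup_{n→∞} μ(B(x,2^{−n}))/g(2^{−n}) ≤ 1, then g-m(A) ≥ (2c)^{−1} μ(A). -/
open MeasureTheory Filter Set

private lemma two_zpow_pos' (k : ℤ) : (0:ℝ) < 2 ^ k := zpow_pos (by norm_num) k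

/-- Lemma 2.1 (i): lower comparison bound for generalized
Hausdorff measures on a compact metric space. -/
theorem hausdorff_lower_comparison
    {E : Type*} [MetricSpace E] [CompactSpace E] [MeasurableSpace E] [BorelSpace E]
    (c : ℝ) (hc : 1 < c)
    (g : ℝ → ℝ) (hg_mono : Monotone g) (hg_cont : Continuous g)
    (hg_nonneg : ∀ r, 0 ≤ g r) (hg0 : g 0 = 0)
    (hg_doubling : ∀ r ≥ (0:ℝ), g (2 * r) ≤ c * g r)
    (μ : Measure E) [IsFiniteMeasure μ]
    (A : Set E) (hA : MeasurableSet A)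
    (hlim : ∀ x ∈ A,
      Filter.limsup
        (fun n : ℕ => μ (Metric.ball x ((2:ℝ) ^ (-(n:ℤ)))) /
          ENNReal.ofReal (g ((2:ℝ) ^ (-(n:ℤ))))) Filter.atTop ≤ 1) :
    ENNReal.ofReal (2 * c)⁻¹ * μ A ≤
      Measure.mkMetric (fun d : ENNReal => ENNReal.ofReal (g d.toReal)) A := by
  classical
  have h2c : (0:ℝ) < 2 * c := by linarith
  set ν : Measure E := Measure.mkMetric (fun d : ENNReal => ENNReal.ofReal (g d.toReal)) with hν
  set S : ℕ → Set E := fun m =>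
    {x | x ∈ A ∧ ∀ n, m ≤ n →
      μ (Metric.ball x ((2:ℝ) ^ (-(n:ℤ)))) ≤ 2 * ENNReal.ofReal (g ((2:ℝ) ^ (-(n:ℤ))))}
    with hSdef
  have hSsub : ∀ m, S m ⊆ A := fun m x hx => hx.1
  have hSmono : Monotone S := fun a b hab x hx => ⟨hx.1, fun n hn => hx.2 n (hab.trans hn)⟩
  have hAsub : A ⊆ ⋃ m, S m := by
    intro x hx
    have h2 : Filter.limsup (fun n : ℕ => μ (Metric.ball x ((2:ℝ) ^ (-(n:ℤ)))) /
        ENNReal.ofReal (g ((2:ℝ) ^ (-(n:ℤ))))) Filter.atTop < 2 :=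
      lt_of_le_of_lt (hlim x hx) ENNReal.one_lt_two
    have hev := Filter.eventually_lt_of_limsup_lt h2
    rw [eventually_atTop] at hev
    obtain ⟨m, hm⟩ := hev
    refine mem_iUnion.2 ⟨m, hx, fun n hn => ?_⟩
    have hle := (hm n hn).le
    rwa [ENNReal.div_le_iff_le_mul (Or.inr (by norm_num)) (Or.inl ENNReal.ofReal_ne_top)] at hle
  -- key estimate for each S m
  have key : ∀ m, ENNReal.ofReal (2 * c)⁻¹ * μ (S m) ≤ ν (S m) := by
    intro m
    rw [hν, Measure.mkMetric_apply]
    refine le_trans ?_ (le_iSup₂ (f := fun r _ => _)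
      (ENNReal.ofReal ((2:ℝ) ^ (-((m:ℤ)+1)))) (ENNReal.ofReal_pos.2 (two_zpow_pos' _)))
    refine le_iInf fun t => le_iInf fun hcov => le_iInf fun hdiam => ?_
    have main : μ (S m) ≤ ENNReal.ofReal (2 * c) *
        ∑' n, ⨆ _ : (t n).Nonempty,
          ENNReal.ofReal (g (EMetric.diam (t n)).toReal) := by
      have hsub : S m ⊆ ⋃ n, t n ∩ S m := fun x hx => by
        obtain ⟨n, hn⟩ := mem_iUnion.1 (hcov hx)
        exact mem_iUnion.2 ⟨n, hn, hx⟩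
      refine le_trans (measure_mono hsub) (le_trans (measure_iUnion_le _) ?_)
      rw [← ENNReal.tsum_mul_left]
      refine ENNReal.tsum_le_tsum fun n => ?_
      rcases eq_empty_or_nonempty (t n ∩ S m) with he | ⟨x, hxt, hxS⟩
      · simp [he]
      · have htne : (t n).Nonempty := ⟨x, hxt⟩
        rw [iSup_pos htne]
        set d := EMetric.diam (t n) with hd
        have hdr : d ≤ ENNReal.ofReal ((2:ℝ) ^ (-((m:ℤ)+1))) := hdiam n
        have hdtop : d ≠ ⊤ := (hdr.trans_lt ENNReal.ofReal_lt_top).ne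
        set δ := d.toReal with hδd
        have hδnn : 0 ≤ δ := ENNReal.toReal_nonneg
        have hδle : δ ≤ (2:ℝ) ^ (-((m:ℤ)+1)) := by
          have h := ENNReal.toReal_mono ENNReal.ofReal_ne_top hdr
          rwa [ENNReal.toReal_ofReal (two_zpow_pos' _).le] at h
        have hball : ∀ k : ℕ, m ≤ k → δ < (2:ℝ) ^ (-(k:ℤ)) →
            μ (t n) ≤ 2 * ENNReal.ofReal (g ((2:ℝ) ^ (-(k:ℤ)))) := by
          intro k hk hlt
          refine le_trans (measure_mono ?_) (hxS.2 k hk)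
          intro y hy
          have h1 : edist y x ≤ d := EMetric.edist_le_diam_of_mem hy hxt
          have h2 : dist y x ≤ δ := by
            rw [dist_edist]
            exact ENNReal.toReal_mono hdtop h1
          exact Metric.mem_ball.2 (lt_of_le_of_lt h2 hlt)
        rcases eq_or_lt_of_le hδnn with hδ0 | hδpos
        · -- degenerate case: diameter is zero, so `μ (t n) = 0`
          have hlim0 : Tendsto (fun k : ℕ => 2 * ENNReal.ofReal (g ((2:ℝ) ^ (-(k:ℤ)))))
              atTop (nhds 0) := by
            have h1 : Tendsto (fun k : ℕ => (2:ℝ) ^ (-(k:ℤ))) atTop (nhds 0) := by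
              simpa [zpow_neg, zpow_natCast, inv_pow] using
                tendsto_pow_atTop_nhds_zero_of_lt_one (by norm_num : (0:ℝ) ≤ 2⁻¹)
                  (by norm_num : (2:ℝ)⁻¹ < 1)
            have h2 : Tendsto (fun k : ℕ => ENNReal.ofReal (g ((2:ℝ) ^ (-(k:ℤ)))))
                atTop (nhds (ENNReal.ofReal (g 0))) :=
              (ENNReal.continuous_ofReal.tendsto _).comp ((hg_cont.tendsto 0).comp h1)
            simpa [hg0] using ENNReal.Tendsto.const_mul h2 (Or.inr (by norm_num : (2:ENNReal) ≠ ⊤))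
          have hle : μ (t n ∩ S m) ≤ 0 := by
            refine le_trans (measure_mono inter_subset_left) (ge_of_tendsto hlim0 ?_)
            filter_upwards [eventually_ge_atTop m] with k hk
            exact hball k hk (by rw [← hδ0]; exact two_zpow_pos' _)
          calc μ (t n ∩ S m) ≤ 0 := hle
            _ ≤ _ := zero_le
        · -- main case: diameter is positive
          have hex : ∃ k : ℕ, (2:ℝ) ^ (-(k:ℤ)) ≤ δ := by
            obtain ⟨k, hk⟩ := exists_pow_lt_of_lt_one hδpos (by norm_num : (2:ℝ)⁻¹ < 1)
            exact ⟨k, by simpa [zpow_neg, zpow_natCast, inv_pow] using hk.le⟩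
          set k0 := Nat.find hex with hk0def
          have hk0spec : (2:ℝ) ^ (-(k0:ℤ)) ≤ δ := Nat.find_spec hex
          have hmk0 : m < k0 := by
            by_contra h
            push_neg at h
            have h1 : (2:ℝ) ^ (-(m:ℤ)) ≤ (2:ℝ) ^ (-(k0:ℤ)) := by
              apply zpow_le_zpow_right₀ one_le_two
              omega
            have h2 : (2:ℝ) ^ (-((m:ℤ)+1)) < (2:ℝ) ^ (-(m:ℤ)) := by
              apply zpow_lt_zpow_right₀ one_lt_two
              omega
            linarith
          set j := k0 - 1 with hjdef
          have hjk0 : k0 = j + 1 := by omega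
          have hmj : m ≤ j := by omega
          have hjlt : δ < (2:ℝ) ^ (-(j:ℤ)) := by
            have := Nat.find_min hex (m := j) (by omega)
            linarith [not_le.1 this]
          have hjge : (2:ℝ) ^ (-((j:ℤ)+1)) ≤ δ := by
            rw [show -((j:ℤ)+1) = -(k0:ℤ) by omega]
            exact hk0spec
          have h2d : (2:ℝ) ^ (-(j:ℤ)) ≤ 2 * δ := by
            have heq : (2:ℝ) ^ (-(j:ℤ)) = 2 * (2:ℝ) ^ (-((j:ℤ)+1)) := by
              rw [show -(j:ℤ) = (-((j:ℤ)+1)) + 1 by ring, zpow_add₀ (two_ne_zero) _ 1]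
              ring
            rw [heq]
            linarith
          have hgle : g ((2:ℝ) ^ (-(j:ℤ))) ≤ c * g δ :=
            (hg_mono h2d).trans (hg_doubling δ hδnn)
          calc μ (t n ∩ S m) ≤ μ (t n) := measure_mono inter_subset_left
            _ ≤ 2 * ENNReal.ofReal (g ((2:ℝ) ^ (-(j:ℤ)))) := hball j hmj hjlt
            _ ≤ ENNReal.ofReal (2 * c) * ENNReal.ofReal (g δ) := by
                rw [show (2:ENNReal) = ENNReal.ofReal 2 by simp,
                  ← ENNReal.ofReal_mul (by norm_num), ← ENNReal.ofReal_mul (by linarith)]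
                apply ENNReal.ofReal_le_ofReal
                nlinarith [hg_nonneg ((2:ℝ) ^ (-(j:ℤ)))]
    -- divide by 2c
    rw [ENNReal.ofReal_inv_of_pos h2c]
    calc (ENNReal.ofReal (2 * c))⁻¹ * μ (S m)
        ≤ (ENNReal.ofReal (2 * c))⁻¹ * (ENNReal.ofReal (2 * c) * _) :=
          mul_le_mul_right main _
      _ = _ := by
          rw [← mul_assoc, ENNReal.inv_mul_cancel (ENNReal.ofReal_pos.2 h2c).ne'
            ENNReal.ofReal_ne_top, one_mul]
          rfl
  -- assemble
  have hμA : μ A ≤ ⨆ m, μ (S m) := by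
    rw [← hSmono.measure_iUnion]
    exact measure_mono hAsub
  calc ENNReal.ofReal (2 * c)⁻¹ * μ A
      ≤ ENNReal.ofReal (2 * c)⁻¹ * ⨆ m, μ (S m) := mul_le_mul_right hμA _
    _ = ⨆ m, ENNReal.ofReal (2 * c)⁻¹ * μ (S m) := by rw [ENNReal.mul_iSup]
    _ ≤ ν A := iSup_le fun m => (key m).trans (measure_mono (hSsub m))
end

section
/- Let (E,d) be a compact metric space, let c > 1, and let g : [0,∞) → [0,∞) be a monotone increasing continuous function with g(0) = 0 and g(2r) ≤ c·g(r) for every r ≥ 0. Let μ be a finite Borel measure on E and let A be a Borel subset of E. If for every x ∈ A one has limsup_{n→∞} μ(B(x,2^{−n}))/g(2^{−n}) ≥ 1, then g-m(A) ≤ 2c³ μ(A). -/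
open MeasureTheory Filter Set Metric
open scoped ENNReal Topology

/-!
Fix `ε > 0` and an open set `U ⊇ A` with `μ U ≤ μ A + ε`. The density hypothesis provides, at
every `x ∈ A` and at every scale, a radius `r` with `closedBall x r ⊆ U` and
`g r ≤ 2 μ (ball x r)`. By the Vitali covering lemma, a disjoint countable subfamily of these
balls, enlarged by the factor `4`, still covers `A`; the enlarged balls have diameter at most
`8 r`, so doubling three times gives `g (diam) ≤ c³ g r ≤ 2 c³ μ (closedBall x r)`. Summing over
the disjoint family bounds the `g`-Hausdorff premeasure of `A` by `2 c³ μ U` at every scale.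
-/

theorem ENNReal.frequently_le_two_mul_of_one_le_limsup_div {β : Type*} {l : Filter β}
    {a b : β → ℝ≥0∞} (h : 1 ≤ limsup (fun n => a n / b n) l) :
    ∃ᶠ n in l, b n ≤ 2 * a n := by
  by_contra hfreq
  have hsmall : ∀ᶠ n in l, a n / b n ≤ 2⁻¹ := by
    filter_upwards [not_frequently.1 hfreq] with n hn
    refine ENNReal.div_le_of_le_mul ?_
    calc a n = 2⁻¹ * (2 * a n) := by
          rw [← mul_assoc, ENNReal.inv_mul_cancel two_ne_zero ENNReal.ofNat_ne_top, one_mul]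
      _ ≤ 2⁻¹ * b n := by gcongr; exact (not_le.1 hn).le
  exact ENNReal.one_half_lt_one.not_ge (h.trans (limsup_le_of_le (by isBoundedDefault) hsmall))

theorem le_pow_mul_of_doubling {g : ℝ → ℝ} {c : ℝ} (hc : 0 ≤ c)
    (hg : ∀ r ≥ (0:ℝ), g (2 * r) ≤ c * g r) (n : ℕ) {r : ℝ} (hr : 0 ≤ r) :
    g (2 ^ n * r) ≤ c ^ n * g r := by
  induction n with
  | zero => simp
  | succ n ih =>
    calc g (2 ^ (n + 1) * r) = g (2 * (2 ^ n * r)) := by ring_nf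
      _ ≤ c * g (2 ^ n * r) := hg _ (by positivity)
      _ ≤ c * (c ^ n * g r) := by gcongr
      _ = c ^ (n + 1) * g r := by ring

section Balls

variable {E : Type*} [PseudoMetricSpace E] [MeasurableSpace E]

theorem exists_radius_le_two_mul_measure_ball (μ : Measure E) (g : ℝ → ℝ) {x : E}
    {ρ : ℕ → ℝ} (hρ_pos : ∀ n, 0 < ρ n) (hρ : Tendsto ρ atTop (𝓝 0))
    (hx : 1 ≤ limsup (fun n => μ (ball x (ρ n)) / ENNReal.ofReal (g (ρ n))) atTop)
    {U : Set E} (hU : U ∈ 𝓝 x) {δ : ℝ} (hδ : 0 < δ) :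
    ∃ r ∈ Ioc 0 δ, closedBall x r ⊆ U ∧ ENNReal.ofReal (g r) ≤ 2 * μ (ball x r) := by
  obtain ⟨n, hgn, hnU, hnδ⟩ :=
    ((ENNReal.frequently_le_two_mul_of_one_le_limsup_div hx).and_eventually
      ((hρ.eventually (eventually_closedBall_subset hU)).and
        (hρ.eventually (eventually_le_nhds hδ)))).exists
  exact ⟨ρ n, ⟨hρ_pos n, hnδ⟩, hnU, hgn⟩

theorem ofReal_apply_diam_closedBall_four_mul_le (μ : Measure E) {g : ℝ → ℝ} {c : ℝ}
    (hc : 0 ≤ c) (hg_mono : Monotone g) (hg_doubling : ∀ r ≥ (0:ℝ), g (2 * r) ≤ c * g r)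
    {x : E} {r : ℝ} (hr : 0 < r) (hgr : ENNReal.ofReal (g r) ≤ 2 * μ (ball x r)) :
    ENNReal.ofReal (g (diam (closedBall x (4 * r)))) ≤
      ENNReal.ofReal (2 * c ^ 3) * μ (closedBall x r) :=
  calc ENNReal.ofReal (g (diam (closedBall x (4 * r))))
      ≤ ENNReal.ofReal (g (2 ^ 3 * r)) := by
        gcongr
        exact hg_mono ((diam_closedBall (by positivity)).trans_eq (by ring))
    _ ≤ ENNReal.ofReal (c ^ 3 * g r) := by
        gcongr
        exact le_pow_mul_of_doubling hc hg_doubling 3 hr.le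
    _ = ENNReal.ofReal (c ^ 3) * ENNReal.ofReal (g r) := ENNReal.ofReal_mul (by positivity)
    _ ≤ ENNReal.ofReal (c ^ 3) * (2 * μ (closedBall x r)) := by
        gcongr
        exact hgr.trans (by gcongr; exact ball_subset_closedBall)
    _ = ENNReal.ofReal (2 * c ^ 3) * μ (closedBall x r) := by
        rw [ENNReal.ofReal_mul zero_le_two, ENNReal.ofReal_ofNat]
        ring

theorem tsum_apply_ediam_le_mul_measure [OpensMeasurableSpace E] (μ : Measure E)
    (m : ℝ≥0∞ → ℝ≥0∞) {u U : Set E} {r : E → ℝ} {C : ℝ≥0∞} {τ : ℝ} (hu : u.Countable)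
    (hdisj : u.PairwiseDisjoint (fun x => closedBall x (r x)))
    (hU : ∀ x ∈ u, closedBall x (r x) ⊆ U)
    (hm : ∀ x ∈ u, m (ediam (closedBall x (τ * r x))) ≤ C * μ (closedBall x (r x))) :
    ∑' x : u, m (ediam (closedBall (x : E) (τ * r x))) ≤ C * μ U :=
  calc ∑' x : u, m (ediam (closedBall (x : E) (τ * r x)))
      ≤ ∑' x : u, C * μ (closedBall (x : E) (r x)) := ENNReal.tsum_le_tsum fun x => hm x x.2
    _ = C * μ (⋃ x ∈ u, closedBall x (r x)) := by
        rw [ENNReal.tsum_mul_left, measure_biUnion hu hdisj fun _ _ => measurableSet_closedBall]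
    _ ≤ C * μ U := by gcongr; exact iUnion₂_subset hU

end Balls

section Covering

variable {E : Type*} [MetricSpace E] [TopologicalSpace.SeparableSpace E]

theorem exists_countable_disjoint_subfamily_covering_enlargement_closedBall (A : Set E)
    {r : E → ℝ} {R : ℝ} (hr : ∀ x ∈ A, r x ∈ Ioc 0 R) {τ : ℝ} (hτ : 3 < τ) :
    ∃ u ⊆ A, u.Countable ∧ u.PairwiseDisjoint (fun x => closedBall x (r x)) ∧
      A ⊆ ⋃ x ∈ u, closedBall x (τ * r x) := by
  obtain ⟨u, huA, hdisj, hcov⟩ := Vitali.exists_disjoint_subfamily_covering_enlargement_closedBall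
    A id r R (fun x hx => (hr x hx).2) τ hτ
  refine ⟨u, huA, hdisj.countable_of_nonempty_interior fun x hx => ?_, hdisj, fun x hx => ?_⟩
  · exact ⟨x, ball_subset_interior_closedBall (mem_ball_self (hr x (huA hx)).1)⟩
  · obtain ⟨y, hy, hxy⟩ := hcov x hx
    exact mem_biUnion hy (hxy (mem_closedBall_self (hr x hx).1.le))

variable [MeasurableSpace E] [BorelSpace E]

theorem mkMetric_le_mul_of_forall_exists_closedBall (μ : Measure E) (m : ℝ≥0∞ → ℝ≥0∞)
    {A U : Set E} {C : ℝ≥0∞} {τ : ℝ} (hτ : 3 < τ)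
    (h : ∀ δ > 0, ∀ x ∈ A, ∃ r ∈ Ioc 0 δ, closedBall x r ⊆ U ∧
      m (ediam (closedBall x (τ * r))) ≤ C * μ (closedBall x r)) :
    Measure.mkMetric m A ≤ C * μ U := by
  choose! r hr hrU hrm using h
  set δ : ℕ → ℝ := fun n => 1 / (n + 1)
  have hδ : ∀ n, 0 < δ n := fun n => Nat.one_div_pos_of_nat
  choose u huA hu hdisj hcov using fun n =>
    exists_countable_disjoint_subfamily_covering_enlargement_closedBall A
      (fun x hx => hr _ (hδ n) x hx) hτ
  have := fun n => (hu n).to_subtype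
  have hdiam : ∀ n, ∀ x ∈ A,
      ediam (closedBall x (τ * r (δ n) x)) ≤ ENNReal.ofReal (2 * τ * δ n) :=
    fun n x hx => ediam_le_of_forall_dist_le fun y hy z hz =>
      calc dist y z ≤ τ * r (δ n) x + τ * r (δ n) x :=
            (dist_triangle_right y z x).trans (add_le_add hy hz)
        _ ≤ 2 * τ * δ n := by nlinarith [(hr _ (hδ n) x hx).2]
  have hδ_lim : Tendsto (fun n => ENNReal.ofReal (2 * τ * δ n)) atTop (𝓝 0) := by
    simpa only [mul_zero, ENNReal.ofReal_zero] using ENNReal.tendsto_ofReal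
      ((tendsto_one_div_add_atTop_nhds_zero_nat).const_mul (2 * τ))
  calc Measure.mkMetric m A
      ≤ liminf (fun n => ∑' x : u n, m (ediam (closedBall (x : E) (τ * r (δ n) x)))) atTop :=
        Measure.mkMetric_le_liminf_tsum A _ hδ_lim
          (fun n (x : u n) => closedBall (x : E) (τ * r (δ n) x))
          (.of_forall fun n x => hdiam n x (huA n x.2))
          (.of_forall fun n => by simpa only [biUnion_eq_iUnion] using hcov n) m
    _ ≤ C * μ U := liminf_le_of_frequently_le' (.of_forall fun n =>
        tsum_apply_ediam_le_mul_measure μ m (hu n) (hdisj n)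
          (fun x hx => hrU _ (hδ n) x (huA n hx)) (fun x hx => hrm _ (hδ n) x (huA n hx)))

end Covering

theorem hausdorff_upper_comparison_general
    {E : Type*} [MetricSpace E] [CompactSpace E] [MeasurableSpace E] [BorelSpace E]
    (c : ℝ) (hc : 1 < c)
    (g : ℝ → ℝ) (hg_mono : Monotone g)
    (hg_doubling : ∀ r ≥ (0:ℝ), g (2 * r) ≤ c * g r)
    (μ : Measure E) [IsFiniteMeasure μ]
    (A : Set E)
    (hlim : ∀ x ∈ A,
      1 ≤ Filter.limsup
        (fun n : ℕ => μ (Metric.ball x ((2:ℝ) ^ (-(n:ℤ)))) /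
          ENNReal.ofReal (g ((2:ℝ) ^ (-(n:ℤ))))) Filter.atTop) :
    Measure.mkMetric (fun d : ENNReal => ENNReal.ofReal (g d.toReal)) A ≤
      ENNReal.ofReal (2 * c ^ 3) * μ A := by
  set C := ENNReal.ofReal (2 * c ^ 3)
  have hdyadic : Tendsto (fun n : ℕ => (2:ℝ) ^ (-(n:ℤ))) atTop (𝓝 0) := by
    simpa only [zpow_neg, zpow_natCast, inv_pow] using
      tendsto_pow_atTop_nhds_zero_of_lt_one (by norm_num) (by norm_num : (2:ℝ)⁻¹ < 1)
  refine ENNReal.le_of_forall_pos_le_add fun ε hε _ => ?_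
  obtain ⟨U, hAU, hU, hμU⟩ := A.exists_isOpen_lt_add (measure_ne_top μ A)
    (ENNReal.div_pos (ENNReal.coe_ne_zero.2 hε.ne') ENNReal.ofReal_ne_top).ne'
  have hballs : ∀ δ > 0, ∀ x ∈ A, ∃ r ∈ Ioc 0 δ, closedBall x r ⊆ U ∧
      ENNReal.ofReal (g (ediam (closedBall x (4 * r))).toReal) ≤ C * μ (closedBall x r) := by
    intro δ hδ x hx
    obtain ⟨r, hr, hrU, hgr⟩ := exists_radius_le_two_mul_measure_ball μ g
      (fun n => zpow_pos two_pos _) hdyadic (hlim x hx) (hU.mem_nhds (hAU hx)) hδ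
    exact ⟨r, hr, hrU, ofReal_apply_diam_closedBall_four_mul_le μ (by linarith) hg_mono
      hg_doubling hr.1 hgr⟩
  calc Measure.mkMetric _ A ≤ C * μ U :=
        mkMetric_le_mul_of_forall_exists_closedBall μ _ (by norm_num) hballs
    _ ≤ C * (μ A + ε / C) := by gcongr
    _ ≤ C * μ A + ε := by rw [mul_add]; gcongr; exact ENNReal.mul_div_le

/-- Lemma 2.1 (ii): upper comparison bound for generalized
Hausdorff measures on a compact metric space. -/
theorem hausdorff_upper_comparison
    {E : Type*} [MetricSpace E] [CompactSpace E] [MeasurableSpace E] [BorelSpace E]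
    (c : ℝ) (hc : 1 < c)
    (g : ℝ → ℝ) (hg_mono : Monotone g) (hg_cont : Continuous g)
    (hg_nonneg : ∀ r, 0 ≤ g r) (hg0 : g 0 = 0)
    (hg_doubling : ∀ r ≥ (0:ℝ), g (2 * r) ≤ c * g r)
    (μ : Measure E) [IsFiniteMeasure μ]
    (A : Set E) (hA : MeasurableSet A)
    (hlim : ∀ x ∈ A,
      1 ≤ Filter.limsup
        (fun n : ℕ => μ (Metric.ball x ((2:ℝ) ^ (-(n:ℤ)))) /
          ENNReal.ofReal (g ((2:ℝ) ^ (-(n:ℤ))))) Filter.atTop) :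
    Measure.mkMetric (fun d : ENNReal => ENNReal.ofReal (g d.toReal)) A ≤
      ENNReal.ofReal (2 * c ^ 3) * μ A :=
  hausdorff_upper_comparison_general c hc g hg_mono hg_doubling μ A hlim
end

section
/- Let ζ > 0 and let e : [0,ζ] → [0,∞) be continuous with e(0) = e(ζ) = 0. Let 0 ≤ u ≤ v ≤ s ≤ t ≤ ζ, and suppose x ∈ [u,v] and y ∈ [s,t] satisfy d_e(x,y) = 0. Then m_e(x,s) = e(x); equivalently, e(x) + d_e(x,s) = e(s), i.e. d_e(0,x) + d_e(x,s) = d_e(0,s). (In the coded tree, this says that any point of p_e([u,v]) ∩ p_e([s,t]) lies on the ancestral line of p_e(s).) -/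
open Set

/-- The minimum of the excursion `e` between times `s` and `t`. -/
noncomputable def excMin (e : ℝ → ℝ) (s t : ℝ) : ℝ :=
  sInf (e '' Set.Icc (min s t) (max s t))

/-- The tree pseudometric coded by the excursion `e`. -/
noncomputable def excDist (e : ℝ → ℝ) (s t : ℝ) : ℝ :=
  e s + e t - 2 * excMin e s t

/-- if `x ∈ [u,v]`, `y ∈ [s,t]` with `u ≤ v ≤ s ≤ t` and
`d_e(x,y) = 0`, then `x` lies on the ancestral line of `s` in the coded tree:
`m_e(x,s) = e(x)`, equivalently `d_e(0,x) + d_e(x,s) = d_e(0,s)`. -/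
theorem excursion_overlap_on_ancestral_line
    (ζ : ℝ) (hζ : 0 < ζ) (e : ℝ → ℝ)
    (he_cont : ContinuousOn e (Set.Icc 0 ζ))
    (he_nonneg : ∀ r ∈ Set.Icc (0:ℝ) ζ, 0 ≤ e r)
    (he0 : e 0 = 0) (heζ : e ζ = 0)
    (u v s t x y : ℝ)
    (huv : u ≤ v) (hvs : v ≤ s) (hst : s ≤ t)
    (hu0 : 0 ≤ u) (htζ : t ≤ ζ)
    (hx : x ∈ Set.Icc u v) (hy : y ∈ Set.Icc s t)
    (hd : excDist e x y = 0) :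
    excMin e x s = e x ∧
      excDist e 0 x + excDist e x s = excDist e 0 s := by
  obtain ⟨hux, hxv⟩ := hx
  obtain ⟨hsy, hyt⟩ := hy
  have hx0 : (0:ℝ) ≤ x := hu0.trans hux
  have hxs : x ≤ s := hxv.trans hvs
  have hxy : x ≤ y := hxs.trans hsy
  have hyζ : y ≤ ζ := hyt.trans htζ
  have hsζ : s ≤ ζ := hst.trans htζ
  have hbdd : ∀ a b : ℝ, 0 ≤ a → b ≤ ζ → BddBelow (e '' Set.Icc a b) := by
    rintro a b ha hb
    refine ⟨0, ?_⟩
    rintro z ⟨r, hr, rfl⟩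
    exact he_nonneg r ⟨ha.trans hr.1, hr.2.trans hb⟩
  -- excMin over [a,b] with a ≤ b
  have hmin_eq : ∀ a b : ℝ, a ≤ b → excMin e a b = sInf (e '' Set.Icc a b) := by
    intro a b hab
    rw [excMin, min_eq_left hab, max_eq_right hab]
  have hm_le : ∀ a b r : ℝ, 0 ≤ a → b ≤ ζ → r ∈ Set.Icc a b →
      excMin e a b ≤ e r := by
    intro a b r ha hb hr
    rw [hmin_eq a b (hr.1.trans hr.2)]
    exact csInf_le (hbdd a b ha hb) ⟨r, hr, rfl⟩
  -- from d(x,y)=0 deduce e x = excMin e x y = e y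
  have hmxy_le_x : excMin e x y ≤ e x := hm_le x y x hx0 hyζ ⟨le_refl x, hxy⟩
  have hmxy_le_y : excMin e x y ≤ e y := hm_le x y y hx0 hyζ ⟨hxy, le_refl y⟩
  have hsum : e x + e y = 2 * excMin e x y := by
    have := hd
    unfold excDist at this
    linarith
  have hex : e x = excMin e x y := by linarith
  -- monotonicity: excMin e x y ≤ excMin e x s
  have hmon : excMin e x y ≤ excMin e x s := by
    rw [hmin_eq x y hxy, hmin_eq x s hxs]
    exact csInf_le_csInf (hbdd x y hx0 hyζ) ⟨e x, x, ⟨le_refl x, hxs⟩, rfl⟩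
      (Set.image_mono (Set.Icc_subset_Icc le_rfl hsy))
  have hmxs_le : excMin e x s ≤ e x := hm_le x s x hx0 hsζ ⟨le_refl x, hxs⟩
  have h1 : excMin e x s = e x := le_antisymm hmxs_le (hex ▸ hmon)
  refine ⟨h1, ?_⟩
  -- split excMin e 0 s
  have hsplit : excMin e 0 s = min (excMin e 0 x) (excMin e x s) := by
    rw [hmin_eq 0 s (hx0.trans hxs), hmin_eq 0 x hx0, hmin_eq x s hxs,
      ← Set.Icc_union_Icc_eq_Icc hx0 hxs, Set.image_union]
    exact csInf_union (hbdd 0 x le_rfl (hxs.trans hsζ))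
      ⟨e 0, 0, ⟨le_refl 0, hx0⟩, rfl⟩ (hbdd x s hx0 hsζ)
      ⟨e x, x, ⟨le_refl x, hxs⟩, rfl⟩
  have hm0x_le : excMin e 0 x ≤ e x := hm_le 0 x x le_rfl (hxs.trans hsζ) ⟨hx0, le_refl x⟩
  have h0s : excMin e 0 s = excMin e 0 x := by
    rw [hsplit, h1, min_eq_left hm0x_le]
  unfold excDist
  rw [h1, h0s, he0]
  ring
end

section
/- Let α ∈ (1,2) and fix t > 0. For γ > 0 let v^0_t(γ) ∈ [0, γ^{1/α}) be the unique solution of ∫_0^{v^0_t(γ)} dy/(γ − y^α) = t, and set φ_t(γ) := −log(1 − γ^{−1/α} v^0_t(γ)), so that v^0_t(γ) = γ^{1/α}(1 − e^{−φ_t(γ)}). Then lim_{γ→∞} γ^{(1/α)−1} φ_t(γ) = α t. -/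
open Set Filter MeasureTheory

/-- Subadditivity: for `0 < β ≤ 1` and `z ∈ [0,1]`, `1 ≤ z^β + (1-z)^β`. -/
lemma stable_aux_subadd {β : ℝ} (hβ0 : 0 < β) (hβ1 : β ≤ 1) {z : ℝ}
    (hz0 : 0 ≤ z) (hz1 : z ≤ 1) : 1 ≤ z ^ β + (1 - z) ^ β := by
  have h1 : z ≤ z ^ β := by
    rcases eq_or_lt_of_le hz0 with h | h
    · rw [← h, Real.zero_rpow hβ0.ne']
    · calc z = z ^ (1:ℝ) := (Real.rpow_one z).symm
        _ ≤ z ^ β := Real.rpow_le_rpow_of_exponent_ge h hz1 hβ1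
  have h2 : 1 - z ≤ (1 - z) ^ β := by
    rcases eq_or_lt_of_le (sub_nonneg.mpr hz1) with h | h
    · rw [← h, Real.zero_rpow hβ0.ne']
    · calc 1 - z = (1 - z) ^ (1:ℝ) := (Real.rpow_one _).symm
        _ ≤ (1 - z) ^ β := Real.rpow_le_rpow_of_exponent_ge h (by linarith) hβ1
  linarith

/-- Key numerator bound: `α(1-z) - (1-z^α) ≤ (1-z)^α` for `z ∈ [0,1]`, `1 < α`. -/
lemma stable_aux_num_le {α : ℝ} (hα1 : 1 < α) (hα2 : α < 2) {z : ℝ}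
    (hz0 : 0 ≤ z) (hz1 : z ≤ 1) :
    α * (1 - z) - (1 - z ^ α) ≤ (1 - z) ^ α := by
  set k : ℝ → ℝ := fun x => (1 - x) ^ α + 1 - x ^ α - α * (1 - x) with hk
  have hαpos : (0:ℝ) < α := by linarith
  have hca : Continuous fun x : ℝ => x ^ α :=
    continuous_iff_continuousAt.mpr fun x =>
      Real.continuousAt_rpow_const x α (Or.inr hαpos.le)
  have hcont : ContinuousOn k (Icc 0 1) := by
    have : Continuous k := by
      have hcb : Continuous fun x : ℝ => (1 - x) ^ α :=
        hca.comp (continuous_const.sub continuous_id)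
      exact ((hcb.add continuous_const).sub hca).sub
        (continuous_const.mul (continuous_const.sub continuous_id))
    exact this.continuousOn
  have hderiv : ∀ x ∈ interior (Icc (0:ℝ) 1),
      HasDerivAt k ((-1) * α * (1 - x) ^ (α - 1) - α * x ^ (α - 1) - α * (-1)) x := by
    intro x hx
    have h1 : HasDerivAt (fun x : ℝ => (1 - x) ^ α) ((-1) * α * (1 - x) ^ (α - 1)) x :=
      HasDerivAt.rpow_const ((hasDerivAt_id x).const_sub 1) (Or.inr hα1.le)
    have h2 : HasDerivAt (fun x : ℝ => x ^ α) (α * x ^ (α - 1)) x :=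
      Real.hasDerivAt_rpow_const (Or.inr hα1.le)
    have h3 : HasDerivAt (fun x : ℝ => α * (1 - x)) (α * (-1)) x :=
      ((hasDerivAt_id x).const_sub 1).const_mul α
    exact (((h1.add_const 1).sub h2).sub h3)
  have hanti : AntitoneOn k (Icc 0 1) := by
    apply antitoneOn_of_deriv_nonpos (convex_Icc 0 1) hcont
    · intro x hx
      exact (hderiv x hx).differentiableAt.differentiableWithinAt
    · intro x hx
      rw [(hderiv x hx).deriv]
      rw [interior_Icc] at hx
      have hs := stable_aux_subadd (by linarith : (0:ℝ) < α - 1) (by linarith)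
        hx.1.le hx.2.le
      nlinarith [hs]
  have hk1 : k 1 = 0 := by
    simp [hk, Real.zero_rpow (by linarith : α ≠ 0), Real.one_rpow]
  have := hanti ⟨hz0, hz1⟩ ⟨zero_le_one, le_refl 1⟩ hz1
  rw [hk1] at this
  simp only [hk] at this
  linarith

/-- `∫_0^w (1-z)⁻¹ dz = -log(1-w)` for `0 ≤ w < 1`. -/
lemma stable_aux_int_inv {w : ℝ} (hw0 : 0 ≤ w) (hw1 : w < 1) :
    ∫ z in (0:ℝ)..w, (1 - z)⁻¹ = -Real.log (1 - w) := by
  have huIcc : uIcc (0:ℝ) w = Icc 0 w := uIcc_of_le hw0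
  have hne : ∀ z ∈ Icc (0:ℝ) w, (1:ℝ) - z ≠ 0 := fun z hz => by
    have := hz.2; nlinarith [hz.1]
  have hder : ∀ z ∈ uIcc (0:ℝ) w,
      HasDerivAt (fun z => -Real.log (1 - z)) ((1 - z)⁻¹) z := by
    intro z hz
    rw [huIcc] at hz
    have h1 : HasDerivAt (fun z : ℝ => 1 - z) (-1) z := (hasDerivAt_id z).const_sub 1
    have h2 := (Real.hasDerivAt_log (hne z hz)).comp z h1
    have h3 : HasDerivAt (fun z => -Real.log (1 - z)) (-((1 - z)⁻¹ * -1)) z := h2.neg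
    convert h3 using 1
    ring
  have hint : IntervalIntegrable (fun z : ℝ => (1 - z)⁻¹) volume 0 w := by
    apply ContinuousOn.intervalIntegrable
    rw [huIcc]
    exact ((continuousOn_const.sub continuousOn_id).inv₀ hne)
  have := intervalIntegral.integral_eq_sub_of_hasDerivAt hder hint
  simpa using this

/-- `∫_0^w (1-z)^(α-2) dz = (1-(1-w)^(α-1))/(α-1)` for `0 ≤ w < 1`, `1 < α`. -/
lemma stable_aux_int_rpow {α w : ℝ} (hα1 : 1 < α) (hw0 : 0 ≤ w) (hw1 : w < 1) :
    ∫ z in (0:ℝ)..w, (1 - z) ^ (α - 2) = (1 - (1 - w) ^ (α - 1)) / (α - 1) := by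
  have huIcc : uIcc (0:ℝ) w = Icc 0 w := uIcc_of_le hw0
  have hne : ∀ z ∈ Icc (0:ℝ) w, (1:ℝ) - z ≠ 0 := fun z hz => by
    have := hz.2; nlinarith [hz.1]
  have hα1' : α - 1 ≠ 0 := by linarith
  have hder : ∀ z ∈ uIcc (0:ℝ) w,
      HasDerivAt (fun z => -((1 - z) ^ (α - 1)) / (α - 1)) ((1 - z) ^ (α - 2)) z := by
    intro z hz
    rw [huIcc] at hz
    have h1 : HasDerivAt (fun z : ℝ => (1 - z) ^ (α - 1))
        ((-1) * (α - 1) * (1 - z) ^ (α - 1 - 1)) z :=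
      HasDerivAt.rpow_const ((hasDerivAt_id z).const_sub 1) (Or.inl (hne z hz))
    have h2 : HasDerivAt (fun z => -((1 - z) ^ (α - 1)) / (α - 1))
        (-((-1) * (α - 1) * (1 - z) ^ (α - 1 - 1)) / (α - 1)) z := (h1.neg).div_const (α - 1)
    convert h2 using 1
    have : α - 1 - 1 = α - 2 := by ring
    rw [this]
    field_simp
  have hint : IntervalIntegrable (fun z : ℝ => (1 - z) ^ (α - 2)) volume 0 w := by
    apply ContinuousOn.intervalIntegrable
    rw [huIcc]
    exact (continuousOn_const.sub continuousOn_id).rpow_const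
      (fun z hz => Or.inl (hne z hz))
  have := intervalIntegral.integral_eq_sub_of_hasDerivAt hder hint
  rw [this]
  rw [sub_zero, Real.one_rpow]
  ring

/-- asymptotics of `φ_t(γ)` where
`v^0_t(γ) = γ^{1/α}(1 − e^{−φ_t(γ)})` solves `∫_0^{v^0_t(γ)} dy/(γ − y^α) = t`:
one has `γ^{1/α − 1} φ_t(γ) → α t` as `γ → ∞`. -/
theorem stable_v0_asymptotics
    (α t : ℝ) (hα1 : 1 < α) (hα2 : α < 2) (ht : 0 < t)
    (v0 : ℝ → ℝ)
    (hv0 : ∀ γ > (0:ℝ), v0 γ ∈ Set.Ico 0 (γ ^ (1 / α)) ∧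
      ∫ y in (0:ℝ)..v0 γ, (γ - y ^ α)⁻¹ = t) :
    Filter.Tendsto
      (fun γ : ℝ => γ ^ (1 / α - 1) * (-Real.log (1 - γ ^ (-(1 / α)) * v0 γ)))
      Filter.atTop (nhds (α * t)) := by
  have hα0 : (0:ℝ) < α := by linarith
  have hαne : α ≠ 0 := hα0.ne'
  set G : ℝ → ℝ := fun w => ∫ z in (0:ℝ)..w, ((1 - z ^ α)⁻¹ - (α * (1 - z))⁻¹) with hGdef
  set W : ℝ → ℝ := fun γ => γ ^ (-(1 / α)) * v0 γ with hWdef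
  -- basic facts about W for γ > 0
  have hWfacts : ∀ γ : ℝ, 0 < γ → 0 ≤ W γ ∧ W γ < 1 := by
    intro γ hγ
    obtain ⟨⟨hu0, hu1⟩, -⟩ := hv0 γ hγ
    have hcp : (0:ℝ) < γ ^ (-(1 / α)) := Real.rpow_pos_of_pos hγ _
    constructor
    · exact mul_nonneg hcp.le hu0
    · have h := mul_lt_mul_of_pos_left hu1 hcp
      rwa [← Real.rpow_add hγ, neg_add_cancel, Real.rpow_zero] at h
  -- pointwise facts on [0, 1)
  have hpt : ∀ z : ℝ, 0 ≤ z → z < 1 →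
      0 < 1 - z ^ α ∧ 1 - z ≤ 1 - z ^ α ∧ 1 - z ^ α ≤ α * (1 - z) := by
    intro z hz0 hz1
    have hA : z ^ α < 1 := Real.rpow_lt_one hz0 hz1 hα0
    have hBle : z ^ α ≤ z := by
      rcases eq_or_lt_of_le hz0 with h | h
      · rw [← h, Real.zero_rpow hαne]
      · calc z ^ α ≤ z ^ (1:ℝ) :=
            Real.rpow_le_rpow_of_exponent_ge h hz1.le hα1.le
          _ = z := Real.rpow_one z
    have hBern : 1 + α * (z - 1) ≤ z ^ α := by
      have := one_add_mul_self_le_rpow_one_add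
        (by linarith : (-1:ℝ) ≤ z - 1) hα1.le
      simpa using this
    exact ⟨by linarith, by linarith, by linarith⟩
  -- continuity of the two inverse integrands on [0, w] for w < 1
  have hcont1 : ∀ w : ℝ, 0 ≤ w → w < 1 →
      ContinuousOn (fun z : ℝ => (1 - z ^ α)⁻¹) (Icc 0 w) := by
    intro w hw0 hw1
    have hca : Continuous fun x : ℝ => x ^ α :=
      continuous_iff_continuousAt.mpr fun x =>
        Real.continuousAt_rpow_const x α (Or.inr hα0.le)
    refine (continuousOn_const.sub hca.continuousOn).inv₀ ?_
    intro z hz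
    exact ((hpt z hz.1 (lt_of_le_of_lt hz.2 hw1)).1).ne'
  have hcont2 : ∀ w : ℝ, 0 ≤ w → w < 1 →
      ContinuousOn (fun z : ℝ => (α * (1 - z))⁻¹) (Icc 0 w) := by
    intro w hw0 hw1
    refine (continuousOn_const.mul (continuousOn_const.sub continuousOn_id)).inv₀ ?_
    intro z hz
    have h1 : (0:ℝ) < 1 - z := by
      have : z < 1 := lt_of_le_of_lt hz.2 hw1
      linarith
    exact (mul_pos hα0 h1).ne'
  -- G bounds
  have hGnonneg : ∀ w : ℝ, 0 ≤ w → w < 1 → 0 ≤ G w := by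
    intro w hw0 hw1
    apply intervalIntegral.integral_nonneg hw0
    intro z hz
    obtain ⟨hA, hAB, hAle⟩ := hpt z hz.1 (lt_of_le_of_lt hz.2 hw1)
    have h1 : 0 < α * (1 - z) := lt_of_lt_of_le hA hAle
    have := inv_anti₀ hA hAle
    linarith
  have hGle : ∀ w : ℝ, 0 ≤ w → w < 1 → G w ≤ (α * (α - 1))⁻¹ := by
    intro w hw0 hw1
    have hint1 : IntervalIntegrable (fun z : ℝ => (1 - z ^ α)⁻¹ - (α * (1 - z))⁻¹)
        volume 0 w := by
      apply ContinuousOn.intervalIntegrable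
      rw [uIcc_of_le hw0]
      exact (hcont1 w hw0 hw1).sub (hcont2 w hw0 hw1)
    have hint2 : IntervalIntegrable (fun z : ℝ => (1 - z) ^ (α - 2) / α) volume 0 w := by
      apply ContinuousOn.intervalIntegrable
      rw [uIcc_of_le hw0]
      refine ContinuousOn.div_const ?_ α
      refine (continuousOn_const.sub continuousOn_id).rpow_const ?_
      intro z hz
      have hzlt : z < 1 := lt_of_le_of_lt hz.2 hw1
      refine Or.inl ?_
      simp only [Pi.sub_apply, id_eq]
      exact ne_of_gt (by linarith)
    have hmono : G w ≤ ∫ z in (0:ℝ)..w, (1 - z) ^ (α - 2) / α := by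
      apply intervalIntegral.integral_mono_on hw0 hint1 hint2
      intro z hz
      obtain ⟨hA, hAB, hAle⟩ := hpt z hz.1 (lt_of_le_of_lt hz.2 hw1)
      have hz1 : z < 1 := lt_of_le_of_lt hz.2 hw1
      have hzpos : (0:ℝ) < 1 - z := by linarith
      have hB : (0:ℝ) < α * (1 - z) := by positivity
      have hfrac : (1 - z ^ α)⁻¹ - (α * (1 - z))⁻¹
          = (α * (1 - z) - (1 - z ^ α)) / ((1 - z ^ α) * (α * (1 - z))) := by
        field_simp
      rw [hfrac]
      have hnum := stable_aux_num_le hα1 hα2 hz.1 hz1.le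
      have hden : (1 - z) * (α * (1 - z)) ≤ (1 - z ^ α) * (α * (1 - z)) :=
        mul_le_mul_of_nonneg_right hAB hB.le
      have hstep : (α * (1 - z) - (1 - z ^ α)) / ((1 - z ^ α) * (α * (1 - z)))
          ≤ (1 - z) ^ α / ((1 - z) * (α * (1 - z))) := by
        exact div_le_div₀ (Real.rpow_nonneg hzpos.le α) hnum (mul_pos hzpos hB) hden
      refine hstep.trans (le_of_eq ?_)
      have hkey : (1 - z) ^ α = (1 - z) ^ (α - 2) * (1 - z) ^ (2:ℕ) := by
        rw [← Real.rpow_natCast (1 - z) 2, ← Real.rpow_add hzpos]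
        norm_num
      rw [hkey]
      have h2 : ((1 - z) ^ (2:ℕ) : ℝ) = (1 - z) * (1 - z) := by ring
      rw [h2]
      field_simp
    refine hmono.trans ?_
    rw [intervalIntegral.integral_div, stable_aux_int_rpow hα1 hw0 hw1]
    have hpow : 0 ≤ (1 - w) ^ (α - 1) := Real.rpow_nonneg (by linarith) _
    rw [div_div]
    rw [inv_eq_one_div]
    exact div_le_div₀ zero_le_one (by linarith) (mul_pos hα0 (by linarith)) (le_of_eq (by ring))
  -- the key eventual identity
  have hev : ∀ᶠ γ in atTop,
      γ ^ (1 / α - 1) * (-Real.log (1 - γ ^ (-(1 / α)) * v0 γ))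
        = α * t - α * (γ ^ (1 / α - 1) * G (W γ)) := by
    filter_upwards [eventually_gt_atTop (0:ℝ)] with γ hγ
    obtain ⟨⟨hu0, hu1⟩, hintt⟩ := hv0 γ hγ
    obtain ⟨hW0, hW1⟩ := hWfacts γ hγ
    set w := W γ with hw
    have hcpos : (0:ℝ) < γ ^ (1 / α) := Real.rpow_pos_of_pos hγ _
    -- change of variables: t = γ^(1/α-1) * F w
    have hcw : γ ^ (1 / α) * w = v0 γ := by
      rw [hw, hWdef]
      rw [← mul_assoc, ← Real.rpow_add hγ, add_neg_cancel, Real.rpow_zero, one_mul]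
    have hsubst := intervalIntegral.smul_integral_comp_mul_left
      (fun y => (γ - y ^ α)⁻¹) (γ ^ (1 / α)) (a := 0) (b := w)
    rw [mul_zero, hcw] at hsubst
    have hcongr : ∫ z in (0:ℝ)..w, (γ - (γ ^ (1 / α) * z) ^ α)⁻¹
        = ∫ z in (0:ℝ)..w, γ⁻¹ * (1 - z ^ α)⁻¹ := by
      apply intervalIntegral.integral_congr
      intro z hz
      rw [uIcc_of_le hW0] at hz
      have hz0 : 0 ≤ z := hz.1
      show (γ - (γ ^ (1 / α) * z) ^ α)⁻¹ = γ⁻¹ * (1 - z ^ α)⁻¹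
      have hcα : (γ ^ (1 / α)) ^ α = γ := by
        rw [← Real.rpow_mul hγ.le, one_div_mul_cancel hαne, Real.rpow_one]
      rw [Real.mul_rpow hcpos.le hz0, hcα,
        show γ - γ * z ^ α = γ * (1 - z ^ α) by ring, mul_inv]
    have hF : ∫ z in (0:ℝ)..w, (1 - z ^ α)⁻¹ = γ ^ (1 - 1 / α) * t := by
      have ht' : γ ^ (1 / α) * (γ⁻¹ * ∫ z in (0:ℝ)..w, (1 - z ^ α)⁻¹) = t := by
        rw [← intervalIntegral.integral_const_mul, ← hcongr]
        rw [← smul_eq_mul, hsubst, hintt]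
      have hγinv : γ⁻¹ = γ ^ (-1:ℝ) := by
        rw [Real.rpow_neg_one]
      have hc : γ ^ (1 / α) * γ⁻¹ = γ ^ (1 / α - 1) := by
        rw [hγinv, ← Real.rpow_add hγ]
        ring_nf
      have ht'' : γ ^ (1 / α - 1) * ∫ z in (0:ℝ)..w, (1 - z ^ α)⁻¹ = t := by
        rw [← hc]; rw [← ht']; ring
      have hone : γ ^ (1 - 1 / α) * γ ^ (1 / α - 1) = 1 := by
        rw [← Real.rpow_add hγ]
        norm_num
      calc ∫ z in (0:ℝ)..w, (1 - z ^ α)⁻¹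
          = (γ ^ (1 - 1 / α) * γ ^ (1 / α - 1)) * ∫ z in (0:ℝ)..w, (1 - z ^ α)⁻¹ := by
            rw [hone, one_mul]
        _ = γ ^ (1 - 1 / α) * t := by rw [mul_assoc, ht'']
    -- decomposition: -log(1-w) = α * (F w - G w)
    have hint1 : IntervalIntegrable (fun z : ℝ => (1 - z ^ α)⁻¹) volume 0 w := by
      apply ContinuousOn.intervalIntegrable
      rw [uIcc_of_le hW0]
      exact hcont1 w hW0 hW1
    have hint2 : IntervalIntegrable (fun z : ℝ => (α * (1 - z))⁻¹) volume 0 w := by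
      apply ContinuousOn.intervalIntegrable
      rw [uIcc_of_le hW0]
      exact hcont2 w hW0 hW1
    have hGsplit : G w = (∫ z in (0:ℝ)..w, (1 - z ^ α)⁻¹)
        - ∫ z in (0:ℝ)..w, (α * (1 - z))⁻¹ := by
      rw [hGdef]
      exact intervalIntegral.integral_sub hint1 hint2
    have hint2val : ∫ z in (0:ℝ)..w, (α * (1 - z))⁻¹ = α⁻¹ * (-Real.log (1 - w)) := by
      have : ∀ z : ℝ, (α * (1 - z))⁻¹ = α⁻¹ * (1 - z)⁻¹ := fun z => by
        rw [mul_inv]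
      simp_rw [this]
      rw [intervalIntegral.integral_const_mul, stable_aux_int_inv hW0 hW1]
    have hlog : -Real.log (1 - w) = α * (γ ^ (1 - 1 / α) * t - G w) := by
      rw [hGsplit, hF, hint2val]
      field_simp
      ring
    have hWγ : γ ^ (-(1 / α)) * v0 γ = w := rfl
    rw [hWγ, hlog]
    have hone : γ ^ (1 / α - 1) * γ ^ (1 - 1 / α) = 1 := by
      rw [← Real.rpow_add hγ]; norm_num
    calc γ ^ (1 / α - 1) * (α * (γ ^ (1 - 1 / α) * t - G w))
        = α * ((γ ^ (1 / α - 1) * γ ^ (1 - 1 / α)) * t) - α * (γ ^ (1 / α - 1) * G w) := by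
          ring
      _ = α * t - α * (γ ^ (1 / α - 1) * G w) := by rw [hone, one_mul]
  -- the limit
  have hexp : (0:ℝ) < 1 - 1 / α := by
    have : 1 / α < 1 := by
      rw [div_lt_one hα0]; exact hα1
    linarith
  have hlim0 : Tendsto (fun γ : ℝ => γ ^ (1 / α - 1) * G (W γ)) atTop (nhds 0) := by
    apply squeeze_zero'
    · filter_upwards [eventually_gt_atTop (0:ℝ)] with γ hγ
      obtain ⟨hW0, hW1⟩ := hWfacts γ hγ
      exact mul_nonneg (Real.rpow_pos_of_pos hγ _).le (hGnonneg _ hW0 hW1)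
    · filter_upwards [eventually_gt_atTop (0:ℝ)] with γ hγ
      obtain ⟨hW0, hW1⟩ := hWfacts γ hγ
      exact mul_le_mul_of_nonneg_left (hGle _ hW0 hW1) (Real.rpow_pos_of_pos hγ _).le
    · have h := (tendsto_rpow_neg_atTop hexp).mul_const ((α * (α - 1))⁻¹)
      rw [zero_mul] at h
      refine h.congr (fun γ => ?_)
      rw [show -(1 - 1/α) = 1/α - 1 by ring]
  have hfinal : Tendsto (fun γ : ℝ => α * t - α * (γ ^ (1 / α - 1) * G (W γ)))
      atTop (nhds (α * t)) := by
    have := tendsto_const_nhds (x := α * t) (f := atTop (α := ℝ)) |>.sub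
      (hlim0.const_mul α)
    simpa using this
  exact Filter.Tendsto.congr' (by filter_upwards [hev] with γ h using h.symm) hfinal
end

section
/- Let α ∈ (1,2) and fix t > 0. For γ > 0 let v^∞_t(γ) ∈ (γ^{1/α}, ∞) be the unique solution of ∫_{v^∞_t(γ)}^∞ dy/(y^α − γ) = t, and set φ̃_t(γ) := −log(γ^{−1/α} v^∞_t(γ) − 1), so that v^∞_t(γ) = γ^{1/α}(1 + e^{−φ̃_t(γ)}). Then lim_{γ→∞} γ^{(1/α)−1} φ̃_t(γ) = α t. -/
open Set Filter MeasureTheory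

lemma aux_meas (α : ℝ) (hα : 0 ≤ α) : Measurable (fun u : ℝ => (u ^ α - 1)⁻¹) :=
  (((Real.continuous_rpow_const hα).sub continuous_const).measurable).inv

lemma aux_int (α b : ℝ) (hα : 1 < α) (hb : 1 < b) :
    IntegrableOn (fun u : ℝ => (u ^ α - 1)⁻¹) (Ioi b) := by
  have hb0 : (0:ℝ) < b := lt_trans one_pos hb
  have hα0 : (0:ℝ) < α := lt_trans one_pos hα
  have hlt : b ^ (-α) < 1 := Real.rpow_lt_one_of_one_lt_of_neg hb (by linarith)
  have hK : (0:ℝ) < 1 - b ^ (-α) := by linarith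
  apply Integrable.mono' (g := fun u : ℝ => (1 - b ^ (-α))⁻¹ * u ^ (-α))
  · exact ((integrableOn_Ioi_rpow_of_lt (by linarith) hb0).const_mul _)
  · exact (aux_meas α hα0.le).aestronglyMeasurable
  · rw [ae_restrict_iff' measurableSet_Ioi]
    filter_upwards with u hu
    have hu1 : 1 < u := lt_trans hb hu
    have hu0 : 0 < u := lt_trans one_pos hu1
    have huα : (1:ℝ) < u ^ α := (Real.one_lt_rpow_iff_of_pos hu0).2 (Or.inl ⟨hu1, hα0⟩)
    have key : u ^ α * (1 - b ^ (-α)) ≤ u ^ α - 1 := by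
      have h1 : (1:ℝ) ≤ u ^ α * b ^ (-α) := by
        rw [Real.rpow_neg hb0.le, ← div_eq_mul_inv, ← Real.div_rpow hu0.le hb0.le]
        exact Real.one_le_rpow ((one_le_div hb0).2 hu.le) hα0.le
      nlinarith
    have hpos : 0 < u ^ α * (1 - b ^ (-α)) := by positivity
    have hle : (u ^ α - 1)⁻¹ ≤ (u ^ α * (1 - b ^ (-α)))⁻¹ := inv_anti₀ hpos key
    rw [Real.norm_eq_abs, abs_of_pos (inv_pos.2 (by linarith))]
    calc (u ^ α - 1)⁻¹ ≤ (u ^ α * (1 - b ^ (-α)))⁻¹ := hle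
      _ = (1 - b ^ (-α))⁻¹ * u ^ (-α) := by
          rw [mul_inv, Real.rpow_neg hu0.le, mul_comm]

lemma aux_cov (α γ : ℝ) (hα1 : 1 < α) (hγ : 0 < γ) (v : ℝ) (hv : γ ^ (1/α) < v) :
    ∫ y in Ioi v, (y ^ α - γ)⁻¹ =
      γ ^ (1/α - 1) * ∫ u in Ioi (γ ^ (-(1/α)) * v), (u ^ α - 1)⁻¹ := by
  have hα0 : (0:ℝ) < α := lt_trans one_pos hα1
  set c : ℝ := γ ^ (1/α) with hc_def
  have hc : 0 < c := Real.rpow_pos_of_pos hγ _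
  have hcα : c ^ α = γ := by
    rw [hc_def, ← Real.rpow_mul hγ.le, one_div_mul_cancel (ne_of_gt hα0), Real.rpow_one]
  have hinv : γ ^ (-(1/α)) = c⁻¹ := by rw [Real.rpow_neg hγ.le]
  set a : ℝ := γ ^ (-(1/α)) * v with ha_def
  have hca : c * a = v := by
    rw [ha_def, hinv, ← mul_assoc, mul_inv_cancel₀ (ne_of_gt hc), one_mul]
  have ha1 : 1 < a := by
    rw [ha_def, hinv]
    have := (mul_lt_mul_iff_right₀ (inv_pos.2 hc)).2 hv
    rwa [inv_mul_cancel₀ (ne_of_gt hc)] at this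
  have key := MeasureTheory.integral_comp_mul_left_Ioi
      (fun y : ℝ => (y ^ α - γ)⁻¹) a hc
  rw [hca] at key
  have congr1 : ∫ x in Ioi a, ((c * x) ^ α - γ)⁻¹ = ∫ x in Ioi a, γ⁻¹ * (x ^ α - 1)⁻¹ := by
    apply setIntegral_congr_fun measurableSet_Ioi
    intro x hx
    have hx0 : (0:ℝ) < x := lt_trans (lt_trans one_pos ha1) hx
    have : (c * x) ^ α = γ * x ^ α := by
      rw [Real.mul_rpow hc.le hx0.le, hcα]
    simp only []
    rw [this]
    rw [show γ * x ^ α - γ = γ * (x ^ α - 1) by ring, mul_inv]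
  have : ∫ y in Ioi v, (y ^ α - γ)⁻¹ = c • ∫ x in Ioi a, ((c * x) ^ α - γ)⁻¹ := by
    rw [key, smul_smul, mul_inv_cancel₀ (ne_of_gt hc), one_smul]
  rw [this, congr1, MeasureTheory.integral_const_mul, smul_eq_mul, ← mul_assoc]
  congr 1
  rw [hc_def, Real.rpow_sub hγ, Real.rpow_one]; ring

lemma aux_bound (α : ℝ) (hα1 : 1 < α) (hα2 : α < 2) :
    ∃ C : ℝ, 0 ≤ C ∧ ∀ e : ℝ, 0 < e → e < 1 →
      |(∫ u in Ioi (1+e), (u ^ α - 1)⁻¹) + α⁻¹ * Real.log e| ≤ C := by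
  have hα0 : (0:ℝ) < α := lt_trans one_pos hα1
  set T : ℝ := ∫ u in Ioi (2:ℝ), (u ^ α - 1)⁻¹ with hT_def
  have hT0 : 0 ≤ T := by
    apply setIntegral_nonneg measurableSet_Ioi
    intro u hu
    have hu1 : (1:ℝ) < u := by simpa using lt_trans one_lt_two hu
    have : (1:ℝ) < u ^ α := (Real.one_lt_rpow_iff_of_pos (by linarith)).2 (Or.inl ⟨hu1, hα0⟩)
    exact inv_nonneg.2 (by linarith)
  refine ⟨T + 1, by linarith, fun e he0 he1 => ?_⟩
  have h1e : (1:ℝ) < 1 + e := by linarith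
  have h2e : 1 + e ≤ 2 := by linarith
  -- Bernoulli inequalities
  have hlow : ∀ u : ℝ, 1 ≤ u → α * (u - 1) ≤ u ^ α - 1 := by
    intro u hu
    have := one_add_mul_self_le_rpow_one_add (by linarith : (-1:ℝ) ≤ u - 1) hα1.le
    rw [show (1:ℝ) + (u - 1) = u by ring] at this
    linarith
  have hup : ∀ u : ℝ, 1 ≤ u → u ^ α - 1 ≤ α * (u ^ (α-1) * (u - 1)) := by
    intro u hu
    have hu0 : (0:ℝ) < u := by linarith
    have hs : (-1:ℝ) ≤ u⁻¹ - 1 := by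
      have : (0:ℝ) < u⁻¹ := inv_pos.2 hu0
      linarith
    have hB := one_add_mul_self_le_rpow_one_add hs hα1.le
    rw [show (1:ℝ) + (u⁻¹ - 1) = u⁻¹ by ring, Real.inv_rpow hu0.le] at hB
    have huα : (0:ℝ) < u ^ α := Real.rpow_pos_of_pos hu0 _
    have hmul : u ^ α * (1 + α * (u⁻¹ - 1)) ≤ 1 := by
      have := mul_le_mul_of_nonneg_left hB huα.le
      rwa [mul_inv_cancel₀ (ne_of_gt huα)] at this
    have h1 : u ^ α * u⁻¹ = u ^ (α - 1) := by
      rw [Real.rpow_sub hu0, Real.rpow_one, div_eq_mul_inv]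
    have h2 : u ^ (α - 1) * u = u ^ α := by
      rw [Real.rpow_sub hu0, Real.rpow_one, div_mul_cancel₀]
      exact ne_of_gt hu0
    nlinarith [hmul]
  have hmid : ∀ u : ℝ, 1 ≤ u → u ^ (α - 1) ≤ 1 + (α - 1) * (u - 1) := by
    intro u hu
    have := rpow_one_add_le_one_add_mul_self (by linarith : (-1:ℝ) ≤ u - 1)
      (by linarith : (0:ℝ) ≤ α - 1) (by linarith : α - 1 ≤ 1)
    rwa [show (1:ℝ) + (u - 1) = u by ring] at this
  -- pointwise bounds on Ioc (1+e) 2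
  have hpt : ∀ u ∈ Ioc (1+e) (2:ℝ),
      (α * (u-1))⁻¹ - 1 ≤ (u ^ α - 1)⁻¹ ∧ (u ^ α - 1)⁻¹ ≤ (α * (u-1))⁻¹ := by
    intro u hu
    obtain ⟨hu1, hu2⟩ := hu
    have hu1' : (1:ℝ) < u := lt_trans h1e hu1
    set p : ℝ := α * (u - 1) with hp_def
    set q : ℝ := u ^ α - 1 with hq_def
    have hp0 : 0 < p := by
      apply mul_pos hα0; linarith
    have hpq : p ≤ q := hlow u hu1'.le
    have hq0 : 0 < q := lt_of_lt_of_le hp0 hpq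
    constructor
    · have hN : q - p ≤ α * (α - 1) * (u - 1)^2 := by
        have h1 := hup u hu1'.le
        have h2 := hmid u hu1'.le
        have hu1le : (0:ℝ) ≤ u - 1 := by linarith
        nlinarith
      have key : p⁻¹ - q⁻¹ ≤ 1 := by
        rw [inv_sub_inv (ne_of_gt hp0) (ne_of_gt hq0), div_le_one (by positivity)]
        nlinarith
      linarith
    · exact inv_anti₀ hp0 hpq
  -- integrabilities
  have hgIoi := aux_int α (1+e) hα1 h1e
  have hgIoc : IntegrableOn (fun u : ℝ => (u ^ α - 1)⁻¹) (Ioc (1+e) 2) :=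
    hgIoi.mono_set Ioc_subset_Ioi_self
  have hJcont : ContinuousOn (fun u : ℝ => (α * (u-1))⁻¹) (Icc (1+e) 2) := by
    apply ContinuousOn.inv₀
    · exact (continuous_const.mul (continuous_id.sub continuous_const)).continuousOn
    · intro x hx
      have : 1 + e ≤ x := hx.1
      have : 0 < α * (x - 1) := mul_pos hα0 (by linarith)
      exact ne_of_gt this
  have hJint : IntegrableOn (fun u : ℝ => (α * (u-1))⁻¹) (Ioc (1+e) 2) :=
    (hJcont.integrableOn_Icc).mono_set Ioc_subset_Icc_self
  have hcint : IntegrableOn (fun _ : ℝ => (1:ℝ)) (Ioc (1+e) 2) :=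
    integrableOn_const measure_Ioc_lt_top.ne
  -- split
  have hsplit : (∫ u in Ioi (1+e), (u ^ α - 1)⁻¹)
      = (∫ u in Ioc (1+e) 2, (u ^ α - 1)⁻¹) + T := by
    rw [hT_def, ← setIntegral_union (Ioc_disjoint_Ioi le_rfl) measurableSet_Ioi hgIoc
      (aux_int α 2 hα1 one_lt_two), Ioc_union_Ioi_eq_Ioi h2e]
  -- value of J
  have hJval : (∫ u in Ioc (1+e) 2, (α * (u-1))⁻¹) = α⁻¹ * (-Real.log e) := by
    rw [← intervalIntegral.integral_of_le h2e]
    have : ∀ u : ℝ, (α * (u-1))⁻¹ = α⁻¹ * (u-1)⁻¹ := fun u => by rw [mul_inv]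
    simp_rw [this]
    rw [intervalIntegral.integral_const_mul]
    congr 1
    have := intervalIntegral.integral_comp_sub_right (a := 1+e) (b := 2) (fun x : ℝ => x⁻¹) 1
    rw [show (1:ℝ) + e - 1 = e by ring, show (2:ℝ) - 1 = 1 by ring] at this
    rw [this, integral_inv]
    · rw [one_div, Real.log_inv]
    · exact Set.notMem_uIcc_of_lt he0 one_pos
  -- bounds for I₁
  set I₁ : ℝ := ∫ u in Ioc (1+e) 2, (u ^ α - 1)⁻¹ with hI_def
  have hIup : I₁ ≤ α⁻¹ * (-Real.log e) := by
    rw [← hJval]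
    exact setIntegral_mono_on hgIoc hJint measurableSet_Ioc (fun u hu => (hpt u hu).2)
  have hIlo : α⁻¹ * (-Real.log e) - 1 ≤ I₁ := by
    have hconst : (∫ u in Ioc (1+e) (2:ℝ), (1:ℝ)) = 1 - e := by
      simp [Real.volume_Ioc]
      rw [max_eq_left (by linarith : (0:ℝ) ≤ 2 - (1+e))]
      ring
    have hmono : (∫ u in Ioc (1+e) 2, ((α * (u-1))⁻¹ - 1))
        ≤ I₁ :=
      setIntegral_mono_on (hJint.sub hcint) hgIoc measurableSet_Ioc
        (fun u hu => (hpt u hu).1)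
    rw [integral_sub hJint hcint, hJval, hconst] at hmono
    linarith
  rw [mul_neg] at hIlo hIup
  rw [hsplit, abs_le]
  constructor
  · linarith
  · linarith

/-- asymptotics of `φ̃_t(γ)` where
`v^∞_t(γ) = γ^{1/α}(1 + e^{−φ̃_t(γ)})` solves `∫_{v^∞_t(γ)}^∞ dy/(y^α − γ) = t`:
one has `γ^{1/α − 1} φ̃_t(γ) → α t` as `γ → ∞`. -/
theorem stable_vinfty_asymptotics
    (α t : ℝ) (hα1 : 1 < α) (hα2 : α < 2) (ht : 0 < t)
    (vinf : ℝ → ℝ)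
    (hvinf : ∀ γ > (0:ℝ), vinf γ ∈ Set.Ioi (γ ^ (1 / α)) ∧
      ∫ y in Set.Ioi (vinf γ), (y ^ α - γ)⁻¹ = t) :
    Filter.Tendsto
      (fun γ : ℝ => γ ^ (1 / α - 1) * (-Real.log (γ ^ (-(1 / α)) * vinf γ - 1)))
      Filter.atTop (nhds (α * t)) := by
  have hα0 : (0:ℝ) < α := by linarith
  have hexp : 1/α - 1 < 0 := by
    have : 1/α < 1 := by rw [div_lt_one hα0]; exact hα1
    linarith
  obtain ⟨C, hC0, hC⟩ := aux_bound α hα1 hα2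
  set ε : ℝ → ℝ := fun γ => γ ^ (-(1/α)) * vinf γ - 1 with hε_def
  have htend0 : Tendsto (fun γ : ℝ => γ ^ (1/α - 1)) atTop (nhds 0) := by
    have := tendsto_rpow_neg_atTop (show (0:ℝ) < 1 - 1/α by linarith)
    simpa [show -(1 - 1/α) = 1/α - 1 by ring] using this
  have hbase : ∀ γ : ℝ, 0 < γ → 0 < ε γ ∧
      t = γ ^ (1/α - 1) * ∫ u in Ioi (1 + ε γ), (u ^ α - 1)⁻¹ := by
    intro γ hγ
    obtain ⟨hv, hint⟩ := hvinf γ hγ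
    have hvgt : γ ^ (1/α) < vinf γ := hv
    have hc : (0:ℝ) < γ ^ (1/α) := Real.rpow_pos_of_pos hγ _
    have ha1 : 1 < γ ^ (-(1/α)) * vinf γ := by
      rw [Real.rpow_neg hγ.le]
      have := (mul_lt_mul_iff_right₀ (inv_pos.2 hc)).2 hvgt
      rwa [inv_mul_cancel₀ (ne_of_gt hc)] at this
    have hεpos : 0 < ε γ := by rw [hε_def]; simp only []; linarith
    refine ⟨hεpos, ?_⟩
    have hcov := aux_cov α γ hα1 hγ (vinf γ) hvgt
    rw [hint] at hcov
    have hset : (1:ℝ) + ε γ = γ ^ (-(1/α)) * vinf γ := by rw [hε_def]; ring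
    rw [hset]
    exact hcov
  have hsmall : ∀ᶠ γ : ℝ in atTop, ε γ < 1 := by
    set T : ℝ := ∫ u in Ioi (2:ℝ), (u ^ α - 1)⁻¹ with hT_def
    have hTt : Tendsto (fun γ : ℝ => γ ^ (1/α - 1) * T) atTop (nhds 0) := by
      simpa using htend0.mul_const T
    filter_upwards [eventually_gt_atTop (0:ℝ), hTt.eventually_lt_const ht] with γ hγ hlt
    by_contra h
    push_neg at h
    obtain ⟨hε0, heq⟩ := hbase γ hγ
    have hFle : (∫ u in Ioi (1 + ε γ), (u ^ α - 1)⁻¹) ≤ T := by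
      apply setIntegral_mono_set (aux_int α 2 hα1 one_lt_two)
      · filter_upwards [ae_restrict_mem measurableSet_Ioi] with u hu
        have hu1 : (1:ℝ) < u := lt_trans one_lt_two hu
        have : (1:ℝ) < u ^ α := (Real.one_lt_rpow_iff_of_pos (by linarith)).2
          (Or.inl ⟨hu1, hα0⟩)
        exact inv_nonneg.2 (by linarith)
      · exact (Ioi_subset_Ioi (by linarith)).eventuallyLE
    have hp : 0 < γ ^ (1/α - 1) := Real.rpow_pos_of_pos hγ _
    have := mul_le_mul_of_nonneg_left hFle hp.le
    rw [← heq] at this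
    linarith
  have hB0 : Tendsto (fun γ : ℝ => γ ^ (1/α - 1) *
      ((∫ u in Ioi (1 + ε γ), (u ^ α - 1)⁻¹) + α⁻¹ * Real.log (ε γ)))
      atTop (nhds 0) := by
    apply squeeze_zero_norm' (a := fun γ : ℝ => C * γ ^ (1/α - 1))
    · filter_upwards [eventually_gt_atTop (0:ℝ), hsmall] with γ hγ hlt
      obtain ⟨hε0, _⟩ := hbase γ hγ
      have hb := hC (ε γ) hε0 hlt
      have hp : 0 < γ ^ (1/α - 1) := Real.rpow_pos_of_pos hγ _
      rw [Real.norm_eq_abs, abs_mul, abs_of_pos hp, mul_comm]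
      exact mul_le_mul_of_nonneg_right hb hp.le
    · simpa using htend0.const_mul C
  have hfinal : Tendsto (fun γ : ℝ => α * t - α * (γ ^ (1/α - 1) *
      ((∫ u in Ioi (1 + ε γ), (u ^ α - 1)⁻¹) + α⁻¹ * Real.log (ε γ))))
      atTop (nhds (α * t)) := by
    have := (tendsto_const_nhds (x := α * t) (f := (atTop : Filter ℝ))).sub (hB0.const_mul α)
    simpa using this
  apply Tendsto.congr' _ hfinal
  filter_upwards [eventually_gt_atTop (0:ℝ)] with γ hγ
  obtain ⟨hε0, heq⟩ := hbase γ hγ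
  have harg : γ ^ (-(1/α)) * vinf γ - 1 = ε γ := by rw [hε_def]
  have h1 : γ ^ (1/α - 1) * (∫ u in Ioi (1 + ε γ), (u ^ α - 1)⁻¹) = t := heq.symm
  show α * t - α * (γ ^ (1/α - 1) *
      ((∫ u in Ioi (1 + ε γ), (u ^ α - 1)⁻¹) + α⁻¹ * Real.log (ε γ)))
    = γ ^ (1 / α - 1) * (-Real.log (γ ^ (-(1 / α)) * vinf γ - 1))
  rw [harg]
  have h2 : α * α⁻¹ = 1 := mul_inv_cancel₀ (ne_of_gt hα0)
  linear_combination (-α) * h1 - (γ ^ (1/α - 1) * Real.log (ε γ)) * h2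
end

section
/- Let α ∈ (1,2). For γ > 0 let v^0_1(γ) ∈ [0, γ^{1/α}) be the unique solution of ∫_0^{v^0_1(γ)} dy/(γ − y^α) = 1 and let v^∞_1(γ) ∈ (γ^{1/α}, ∞) be the unique solution of ∫_{v^∞_1(γ)}^∞ dy/(y^α − γ) = 1. Then v^∞_1(γ) − v^0_1(γ) > 0 and lim_{γ→∞} γ^{−(α−1)/α} log(v^∞_1(γ) − v^0_1(γ)) = −α. -/
open Set Filter MeasureTheory Real Topology

namespace StableVAux

/-- tangent line inequality for rpow: `y^α + α y^(α-1) (x-y) ≤ x^α`. -/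
lemma tangent_rpow {α : ℝ} (hα : 1 ≤ α) {x y : ℝ} (hx : 0 ≤ x) (hy : 0 < y) :
    y ^ α + α * y ^ (α - 1) * (x - y) ≤ x ^ α := by
  have hs : -1 ≤ x / y - 1 := by
    have h0 : 0 ≤ x / y := div_nonneg hx hy.le
    linarith
  have h := one_add_mul_self_le_rpow_one_add hs hα
  have h1 : (1 : ℝ) + (x / y - 1) = x / y := by ring
  rw [h1] at h
  have hyα : (0:ℝ) < y ^ α := rpow_pos_of_pos hy α
  have h2 := mul_le_mul_of_nonneg_left h hyα.le
  have hy1 : y ^ (α - 1) * y = y ^ α := by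
    rw [← Real.rpow_add_one hy.ne' (α - 1), sub_add_cancel]
  have hxy : y ^ α * (x / y) ^ α = x ^ α := by
    rw [Real.div_rpow hx hy.le]
    field_simp
  have expand : y ^ α * (1 + α * (x / y - 1)) = y ^ α + α * y ^ (α - 1) * (x - y) := by
    rw [← hy1]; field_simp
  calc y ^ α + α * y ^ (α - 1) * (x - y)
      = y ^ α * (1 + α * (x / y - 1)) := expand.symm
    _ ≤ y ^ α * (x / y) ^ α := h2
    _ = x ^ α := hxy

lemma continuous_rpow_const {α : ℝ} (hα : 0 ≤ α) : Continuous fun y : ℝ => y ^ α := by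
  rw [continuous_iff_continuousAt]
  exact fun y => Real.continuousAt_rpow_const y α (Or.inr hα)

lemma integral_inv_c_sub {c s t : ℝ} (hs : s ≤ t) (ht : t < c) :
    ∫ y in s..t, (c - y)⁻¹ = Real.log (c - s) - Real.log (c - t) := by
  rw [intervalIntegral.integral_comp_sub_left (fun u => u⁻¹) c,
      integral_inv
        (Set.notMem_uIcc_of_lt (by linarith) (by linarith)),
      Real.log_div (by linarith) (by linarith)]

lemma integral_inv_sub_c {c w b : ℝ} (hw : c < w) (hb : w ≤ b) :
    ∫ y in w..b, (y - c)⁻¹ = Real.log (b - c) - Real.log (w - c) := by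
  rw [intervalIntegral.integral_comp_sub_right (fun u => u⁻¹) c,
      integral_inv
        (Set.notMem_uIcc_of_lt (by linarith) (by linarith)),
      Real.log_div (by linarith) (by linarith)]

end StableVAux

namespace StableVAux

lemma log_lower {α : ℝ} (hα1 : 1 < α) {c v : ℝ} (hc : 0 < c) (hv0 : 0 ≤ v) (hvc : v < c)
    (hint : ∫ y in (0:ℝ)..v, (c ^ α - y ^ α)⁻¹ = 1) :
    Real.log c - α * c ^ (α - 1) ≤ Real.log (c - v) := by
  have hα0 : (0:ℝ) < α := by linarith
  have hA : 0 < α * c ^ (α - 1) := by positivity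
  have hpos : ∀ y ∈ Icc (0:ℝ) v, 0 < c ^ α - y ^ α := by
    intro y hy
    have : y ^ α < c ^ α := Real.rpow_lt_rpow hy.1 (lt_of_le_of_lt hy.2 hvc) hα0
    linarith
  have hptwise : ∀ y ∈ Icc (0:ℝ) v,
      (α * c ^ (α-1) * (c - y))⁻¹ ≤ (c ^ α - y ^ α)⁻¹ := by
    intro y hy
    have h1 := tangent_rpow hα1.le hy.1 hc
    have h2 : α * c ^ (α-1) * (c - y) = -(α * c ^ (α-1) * (y - c)) := by ring
    refine inv_anti₀ (hpos y hy) ?_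
    rw [h2]; linarith
  have hcont1 : IntervalIntegrable (fun y => (α * c ^ (α-1) * (c - y))⁻¹) volume 0 v := by
    apply ContinuousOn.intervalIntegrable
    apply ContinuousOn.inv₀
    · exact (continuous_const.mul (continuous_const.sub continuous_id)).continuousOn
    · intro y hy
      rw [Set.uIcc_of_le hv0] at hy
      have : y < c := lt_of_le_of_lt hy.2 hvc
      exact ne_of_gt (mul_pos hA (by linarith))
  have hcont2 : IntervalIntegrable (fun y => (c ^ α - y ^ α)⁻¹) volume 0 v := by
    apply ContinuousOn.intervalIntegrable
    apply ContinuousOn.inv₀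
    · exact (continuous_const.sub (continuous_rpow_const hα0.le)).continuousOn
    · intro y hy
      rw [Set.uIcc_of_le hv0] at hy
      exact ne_of_gt (hpos y hy)
  have hmono := intervalIntegral.integral_mono_on hv0 hcont1 hcont2 hptwise
  rw [hint] at hmono
  have hcalc : (∫ y in (0:ℝ)..v, (α * c ^ (α-1) * (c - y))⁻¹)
      = (α * c ^ (α-1))⁻¹ * (Real.log c - Real.log (c - v)) := by
    have hre : ∀ y : ℝ, (α * c ^ (α-1) * (c - y))⁻¹ = (α * c ^ (α-1))⁻¹ * (c - y)⁻¹ := by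
      intro y; rw [mul_inv]
    simp_rw [hre]
    rw [intervalIntegral.integral_const_mul, integral_inv_c_sub hv0 hvc, sub_zero]
  rw [hcalc] at hmono
  have h3 := mul_le_mul_of_nonneg_left hmono hA.le
  rw [← mul_assoc, mul_inv_cancel₀ hA.ne', one_mul, mul_one] at h3
  linarith

end StableVAux

namespace StableVAux

lemma rpow_succ {c : ℝ} (hc : 0 ≤ c) (α : ℝ) (hne : α ≠ 0) : c ^ (α-1) * c = c ^ α := by
  rcases eq_or_lt_of_le hc with h | h
  · rw [← h]
    rw [Real.zero_rpow hne, mul_zero]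
  · rw [← Real.rpow_add_one h.ne' (α - 1), sub_add_cancel]

lemma key_lower_ptwise {α : ℝ} (hα1 : 1 < α) {c y : ℝ} (hc : 0 < c) (hy0 : 0 ≤ y) (hyc : y ≤ c) :
    c ^ (α-1) * (c - y) ≤ c ^ α - y ^ α := by
  have hyα : y ^ α = y ^ (α - 1) * y := (rpow_succ hy0 α (by linarith)).symm
  have h1 : y ^ (α-1) ≤ c ^ (α-1) := Real.rpow_le_rpow hy0 hyc (by linarith)
  have h2 : y ^ α ≤ c ^ (α-1) * y := by
    rw [hyα]; exact mul_le_mul_of_nonneg_right h1 hy0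
  have h3 : c ^ (α-1) * c = c ^ α := rpow_succ hc.le α (by linarith)
  nlinarith

lemma log_upper_crude {α : ℝ} (hα1 : 1 < α) {c v : ℝ} (hc : 0 < c) (hv0 : 0 ≤ v) (hvc : v < c)
    (hint : ∫ y in (0:ℝ)..v, (c ^ α - y ^ α)⁻¹ = 1) :
    Real.log (c - v) ≤ Real.log c - c ^ (α - 1) := by
  have hα0 : (0:ℝ) < α := by linarith
  have hA : (0:ℝ) < c ^ (α - 1) := by positivity
  have hpos : ∀ y ∈ Icc (0:ℝ) v, 0 < c ^ α - y ^ α := by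
    intro y hy
    have : y ^ α < c ^ α := Real.rpow_lt_rpow hy.1 (lt_of_le_of_lt hy.2 hvc) hα0
    linarith
  have hptwise : ∀ y ∈ Icc (0:ℝ) v,
      (c ^ α - y ^ α)⁻¹ ≤ (c ^ (α-1) * (c - y))⁻¹ := by
    intro y hy
    have hyc : y ≤ c := le_of_lt (lt_of_le_of_lt hy.2 hvc)
    have h1 := key_lower_ptwise hα1 hc hy.1 hyc
    have hposd : 0 < c ^ (α-1) * (c - y) :=
      mul_pos hA (by linarith [lt_of_le_of_lt hy.2 hvc])
    exact inv_anti₀ hposd h1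
  have hcont1 : IntervalIntegrable (fun y => (c ^ α - y ^ α)⁻¹) volume 0 v := by
    apply ContinuousOn.intervalIntegrable
    apply ContinuousOn.inv₀
    · exact (continuous_const.sub (continuous_rpow_const hα0.le)).continuousOn
    · intro y hy
      rw [Set.uIcc_of_le hv0] at hy
      exact ne_of_gt (hpos y hy)
  have hcont2 : IntervalIntegrable (fun y => (c ^ (α-1) * (c - y))⁻¹) volume 0 v := by
    apply ContinuousOn.intervalIntegrable
    apply ContinuousOn.inv₀
    · exact (continuous_const.mul (continuous_const.sub continuous_id)).continuousOn
    · intro y hy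
      rw [Set.uIcc_of_le hv0] at hy
      have : y < c := lt_of_le_of_lt hy.2 hvc
      exact ne_of_gt (mul_pos hA (by linarith))
  have hmono := intervalIntegral.integral_mono_on hv0 hcont1 hcont2 hptwise
  rw [hint] at hmono
  have hcalc : (∫ y in (0:ℝ)..v, (c ^ (α-1) * (c - y))⁻¹)
      = (c ^ (α-1))⁻¹ * (Real.log c - Real.log (c - v)) := by
    have hre : ∀ y : ℝ, (c ^ (α-1) * (c - y))⁻¹ = (c ^ (α-1))⁻¹ * (c - y)⁻¹ := by
      intro y; rw [mul_inv]
    simp_rw [hre]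
    rw [intervalIntegral.integral_const_mul, integral_inv_c_sub hv0 hvc, sub_zero]
  rw [hcalc] at hmono
  have h3 := mul_le_mul_of_nonneg_left hmono hA.le
  rw [mul_one, ← mul_assoc, mul_inv_cancel₀ hA.ne', one_mul] at h3
  linarith

end StableVAux

namespace StableVAux

lemma log_upper_refined {α : ℝ} (hα1 : 1 < α) {c v : ℝ} (hc2 : 2 ≤ c) (hva : c - 1 ≤ v)
    (hvc : v < c)
    (hint : ∫ y in (0:ℝ)..v, (c ^ α - y ^ α)⁻¹ = 1) :
    Real.log (c - v) ≤ -(α * (c-1) ^ (α - 1)) * (1 - c ^ ((1:ℝ)-α) * Real.log c) := by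
  have hα0 : (0:ℝ) < α := by linarith
  have hc : (0:ℝ) < c := by linarith
  have ha0 : (0:ℝ) < c - 1 := by linarith
  have hv0 : (0:ℝ) ≤ v := by linarith
  have hA : (0:ℝ) < c ^ (α - 1) := by positivity
  have hA' : (0:ℝ) < α * (c-1) ^ (α - 1) := by positivity
  have hpos : ∀ y, 0 ≤ y → y < c → 0 < c ^ α - y ^ α := by
    intro y hy hyc
    have : y ^ α < c ^ α := Real.rpow_lt_rpow hy hyc hα0
    linarith
  -- integrability of f on subintervals
  have hcontf : ∀ s t : ℝ, 0 ≤ s → s ≤ t → t < c →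
      IntervalIntegrable (fun y => (c ^ α - y ^ α)⁻¹) volume s t := by
    intro s t hs hst htc
    apply ContinuousOn.intervalIntegrable
    apply ContinuousOn.inv₀
    · exact (continuous_const.sub (continuous_rpow_const hα0.le)).continuousOn
    · intro y hy
      rw [Set.uIcc_of_le hst] at hy
      exact ne_of_gt (hpos y (le_trans hs hy.1) (lt_of_le_of_lt hy.2 htc))
  have hi1 := hcontf 0 (c-1) le_rfl ha0.le (by linarith)
  have hi2 := hcontf (c-1) v ha0.le hva hvc
  have hsplit := intervalIntegral.integral_add_adjacent_intervals hi1 hi2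
  rw [hint] at hsplit
  -- bound on [0, c-1]
  have hb1 : (∫ y in (0:ℝ)..(c-1), (c ^ α - y ^ α)⁻¹) ≤ (c ^ (α-1))⁻¹ * Real.log c := by
    have hptwise : ∀ y ∈ Icc (0:ℝ) (c-1),
        (c ^ α - y ^ α)⁻¹ ≤ (c ^ (α-1) * (c - y))⁻¹ := by
      intro y hy
      have hyc : y ≤ c := by linarith [hy.2]
      exact inv_anti₀ (mul_pos hA (by linarith [hy.2]))
        (key_lower_ptwise hα1 hc hy.1 hyc)
    have hcont2 : IntervalIntegrable (fun y => (c ^ (α-1) * (c - y))⁻¹) volume 0 (c-1) := by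
      apply ContinuousOn.intervalIntegrable
      apply ContinuousOn.inv₀
      · exact (continuous_const.mul (continuous_const.sub continuous_id)).continuousOn
      · intro y hy
        rw [Set.uIcc_of_le ha0.le] at hy
        exact ne_of_gt (mul_pos hA (by linarith [hy.2]))
    refine le_trans (intervalIntegral.integral_mono_on ha0.le hi1 hcont2 hptwise) ?_
    have hre : ∀ y : ℝ, (c ^ (α-1) * (c - y))⁻¹ = (c ^ (α-1))⁻¹ * (c - y)⁻¹ := fun y => mul_inv _ _
    simp_rw [hre]
    rw [intervalIntegral.integral_const_mul, integral_inv_c_sub ha0.le (by linarith : c - 1 < c),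
      sub_zero, show c - (c-1) = 1 by ring, Real.log_one, sub_zero]
  -- bound on [c-1, v]
  have hb2 : (∫ y in (c-1)..v, (c ^ α - y ^ α)⁻¹)
      ≤ (α * (c-1) ^ (α-1))⁻¹ * (-Real.log (c - v)) := by
    have hptwise : ∀ y ∈ Icc (c-1) v,
        (c ^ α - y ^ α)⁻¹ ≤ (α * (c-1) ^ (α-1) * (c - y))⁻¹ := by
      intro y hy
      have hy0 : 0 < y := lt_of_lt_of_le ha0 hy.1
      have hyc : y < c := lt_of_le_of_lt hy.2 hvc
      have htan := tangent_rpow hα1.le hc.le hy0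
      have hmono : (c-1) ^ (α-1) ≤ y ^ (α-1) :=
        Real.rpow_le_rpow ha0.le hy.1 (by linarith)
      have hle : α * (c-1) ^ (α-1) * (c - y) ≤ c ^ α - y ^ α := by
        have h1 : α * (c-1) ^ (α-1) * (c - y) ≤ α * y ^ (α-1) * (c - y) := by
          apply mul_le_mul_of_nonneg_right _ (by linarith)
          exact mul_le_mul_of_nonneg_left hmono hα0.le
        linarith
      exact inv_anti₀ (mul_pos hA' (by linarith)) hle
    have hcont2 : IntervalIntegrable (fun y => (α * (c-1) ^ (α-1) * (c - y))⁻¹) volume (c-1) v := by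
      apply ContinuousOn.intervalIntegrable
      apply ContinuousOn.inv₀
      · exact (continuous_const.mul (continuous_const.sub continuous_id)).continuousOn
      · intro y hy
        rw [Set.uIcc_of_le hva] at hy
        exact ne_of_gt (mul_pos hA' (by linarith [lt_of_le_of_lt hy.2 hvc]))
    refine le_trans (intervalIntegral.integral_mono_on hva hi2 hcont2 hptwise) ?_
    have hre : ∀ y : ℝ, (α * (c-1) ^ (α-1) * (c - y))⁻¹
        = (α * (c-1) ^ (α-1))⁻¹ * (c - y)⁻¹ := fun y => mul_inv _ _
    simp_rw [hre]
    rw [intervalIntegral.integral_const_mul, integral_inv_c_sub hva hvc,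
      show c - (c-1) = 1 by ring, Real.log_one, zero_sub]
  -- combine
  have hX : c ^ ((1:ℝ)-α) = (c ^ (α-1))⁻¹ := by
    rw [show (1:ℝ)-α = -(α-1) by ring, Real.rpow_neg hc.le]
  have hcomb : 1 - c ^ ((1:ℝ)-α) * Real.log c
      ≤ (α * (c-1) ^ (α-1))⁻¹ * (-Real.log (c - v)) := by
    rw [hX]
    have : (c ^ (α-1))⁻¹ * Real.log c + (α * (c-1) ^ (α-1))⁻¹ * (-Real.log (c - v))
        ≥ 1 := by
      calc (1:ℝ) = (∫ y in (0:ℝ)..(c-1), (c ^ α - y ^ α)⁻¹)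
            + ∫ y in (c-1)..v, (c ^ α - y ^ α)⁻¹ := hsplit.symm
        _ ≤ _ := add_le_add hb1 hb2
    linarith
  have h4 := mul_le_mul_of_nonneg_left hcomb hA'.le
  rw [← mul_assoc, mul_inv_cancel₀ hA'.ne', one_mul] at h4
  linarith

end StableVAux

namespace StableVAux

lemma tail_integral_eq {α : ℝ} (hα1 : 1 < α) {b : ℝ} (hb : 0 < b) :
    ∫ y in Set.Ioi b, 2 * y ^ (-α) = 2 * b ^ ((1:ℝ)-α) / (α-1) := by
  rw [MeasureTheory.integral_const_mul, integral_Ioi_rpow_of_lt (by linarith : -α < -1) hb]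
  have he : -α + 1 = 1 - α := by ring
  rw [he]
  have h2 : -b ^ ((1:ℝ)-α) / (1-α) = b ^ ((1:ℝ)-α) / (α-1) := by
    rw [neg_div, ← div_neg, neg_sub]
  rw [h2, mul_div_assoc]

lemma tail_ptwise {α : ℝ} (hα1 : 1 < α) {c y : ℝ} (hc : 0 < c) (hy : 2 * c ≤ y) :
    (y ^ α - c ^ α)⁻¹ ≤ 2 * y ^ (-α) := by
  have hy0 : 0 < y := by linarith
  have hα0 : (0:ℝ) < α := by linarith
  have hyα : (0:ℝ) < y ^ α := Real.rpow_pos_of_pos hy0 α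
  have hhalf : c ^ α ≤ y ^ α / 2 := by
    have h1 : c ^ α ≤ (y/2) ^ α :=
      Real.rpow_le_rpow hc.le (by linarith) hα0.le
    have h2 : (y/2) ^ α = y ^ α / 2 ^ α := Real.div_rpow hy0.le (by norm_num : (0:ℝ) ≤ 2) α
    have h3 : (2:ℝ) ≤ 2 ^ α := by
      nth_rewrite 1 [show (2:ℝ) = 2 ^ (1:ℝ) by rw [Real.rpow_one]]
      exact Real.rpow_le_rpow_of_exponent_le (by norm_num) hα1.le
    have h4 : y ^ α / 2 ^ α ≤ y ^ α / 2 := by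
      apply div_le_div_of_nonneg_left hyα.le (by norm_num) h3
    linarith
  have hle : y ^ α / 2 ≤ y ^ α - c ^ α := by linarith
  have hpos : (0:ℝ) < y ^ α / 2 := by positivity
  calc (y ^ α - c ^ α)⁻¹ ≤ (y ^ α / 2)⁻¹ := inv_anti₀ hpos hle
    _ = 2 * (y ^ α)⁻¹ := by rw [inv_div]; ring
    _ = 2 * y ^ (-α) := by rw [Real.rpow_neg hy0.le]

lemma log_upper_vinf {α : ℝ} (hα1 : 1 < α) {c w : ℝ} (hc : 0 < c) (hw : c < w)
    (hint : ∫ y in Set.Ioi w, (y ^ α - c ^ α)⁻¹ = 1)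
    (hR : 2 * (2*c) ^ ((1:ℝ)-α) / (α-1) < 1) :
    Real.log (w - c) ≤ Real.log c
      - α * c ^ (α-1) * (1 - 2 * (2*c) ^ ((1:ℝ)-α) / (α-1)) := by
  have hα0 : (0:ℝ) < α := by linarith
  have hw0 : (0:ℝ) < w := lt_trans hc hw
  have h2c : (0:ℝ) < 2 * c := by linarith
  have hA : (0:ℝ) < α * c ^ (α-1) := by positivity
  have hInt : IntegrableOn (fun y => (y ^ α - c ^ α)⁻¹) (Set.Ioi w) volume := by
    by_contra hcon
    rw [MeasureTheory.integral_undef hcon] at hint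
    norm_num at hint
  -- w < 2c
  have hw2 : w < 2 * c := by
    by_contra hcon
    push_neg at hcon
    have hboundInt : IntegrableOn (fun y => 2 * y ^ (-α)) (Set.Ioi w) volume :=
      (integrableOn_Ioi_rpow_of_lt (by linarith : -α < -1) hw0).const_mul 2
    have hmono := MeasureTheory.setIntegral_mono_on hInt hboundInt measurableSet_Ioi
      (fun y hy => tail_ptwise hα1 hc (le_trans hcon (le_of_lt hy)))
    rw [hint, tail_integral_eq hα1 hw0] at hmono
    have hwc : w ^ ((1:ℝ)-α) ≤ (2*c) ^ ((1:ℝ)-α) :=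
      Real.rpow_le_rpow_of_nonpos h2c hcon (by linarith)
    have h5 : 2 * w ^ ((1:ℝ)-α) / (α-1) ≤ 2 * (2*c) ^ ((1:ℝ)-α) / (α-1) :=
      div_le_div_of_nonneg_right (by linarith) (by linarith)
    linarith
  -- split the integral at 2c
  have hsub1 : Set.Ioc w (2*c) ⊆ Set.Ioi w := Set.Ioc_subset_Ioi_self
  have hsub2 : Set.Ioi (2*c) ⊆ Set.Ioi w := Set.Ioi_subset_Ioi hw2.le
  have hunion := MeasureTheory.setIntegral_union (Set.Ioc_disjoint_Ioi le_rfl)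
    measurableSet_Ioi (hInt.mono_set hsub1) (hInt.mono_set hsub2)
  rw [Set.Ioc_union_Ioi_eq_Ioi hw2.le, hint] at hunion
  -- tail bound
  have hboundInt : IntegrableOn (fun y => 2 * y ^ (-α)) (Set.Ioi (2*c)) volume :=
    (integrableOn_Ioi_rpow_of_lt (by linarith : -α < -1) h2c).const_mul 2
  have htailB : (∫ y in Set.Ioi (2*c), (y ^ α - c ^ α)⁻¹)
      ≤ 2 * (2*c) ^ ((1:ℝ)-α) / (α-1) := by
    refine le_trans (MeasureTheory.setIntegral_mono_on (hInt.mono_set hsub2) hboundInt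
      measurableSet_Ioi (fun y hy => tail_ptwise hα1 hc (le_of_lt hy))) ?_
    rw [tail_integral_eq hα1 h2c]
  -- main bound
  have hmainB : (∫ y in Set.Ioc w (2*c), (y ^ α - c ^ α)⁻¹)
      ≤ (α * c ^ (α-1))⁻¹ * (Real.log c - Real.log (w - c)) := by
    rw [← intervalIntegral.integral_of_le hw2.le]
    have hgi : IntervalIntegrable (fun y => (y ^ α - c ^ α)⁻¹) volume w (2*c) := by
      apply ContinuousOn.intervalIntegrable
      apply ContinuousOn.inv₀
      · exact ((continuous_rpow_const hα0.le).sub continuous_const).continuousOn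
      · intro y hy
        rw [Set.uIcc_of_le hw2.le] at hy
        have : c ^ α < y ^ α := Real.rpow_lt_rpow hc.le (lt_of_lt_of_le hw hy.1) hα0
        exact ne_of_gt (by linarith)
    have hbi : IntervalIntegrable (fun y => (α * c ^ (α-1) * (y - c))⁻¹) volume w (2*c) := by
      apply ContinuousOn.intervalIntegrable
      apply ContinuousOn.inv₀
      · exact (continuous_const.mul (continuous_id.sub continuous_const)).continuousOn
      · intro y hy
        rw [Set.uIcc_of_le hw2.le] at hy
        exact ne_of_gt (mul_pos hA (by linarith [hy.1]))
    have hptwise : ∀ y ∈ Icc w (2*c),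
        (y ^ α - c ^ α)⁻¹ ≤ (α * c ^ (α-1) * (y - c))⁻¹ := by
      intro y hy
      have hcy : c < y := lt_of_lt_of_le hw hy.1
      have htan := tangent_rpow hα1.le (by linarith : (0:ℝ) ≤ y) hc
      exact inv_anti₀ (mul_pos hA (by linarith)) (by linarith)
    refine le_trans (intervalIntegral.integral_mono_on hw2.le hgi hbi hptwise) ?_
    have hre : ∀ y : ℝ, (α * c ^ (α-1) * (y - c))⁻¹
        = (α * c ^ (α-1))⁻¹ * (y - c)⁻¹ := fun y => mul_inv _ _
    simp_rw [hre]
    rw [intervalIntegral.integral_const_mul, integral_inv_sub_c hw hw2.le,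
      show 2*c - c = c by ring]
  -- combine
  have hcomb : 1 - 2 * (2*c) ^ ((1:ℝ)-α) / (α-1)
      ≤ (α * c ^ (α-1))⁻¹ * (Real.log c - Real.log (w - c)) := by linarith
  have h4 := mul_le_mul_of_nonneg_left hcomb hA.le
  rw [← mul_assoc, mul_inv_cancel₀ hA.ne', one_mul] at h4
  linarith

end StableVAux

namespace StableVAux

noncomputable def lo (α γ : ℝ) : ℝ :=
  Real.log (γ^(1/α)) - α * (γ^(1/α))^(α-1)

noncomputable def u1 (α γ : ℝ) : ℝ :=
  Real.log (γ^(1/α)) - α * (γ^(1/α))^(α-1) * (1 - 2*(2*γ^(1/α))^((1:ℝ)-α)/(α-1))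

noncomputable def u2 (α γ : ℝ) : ℝ :=
  -(α * (γ^(1/α)-1)^(α-1)) * (1 - (γ^(1/α))^((1:ℝ)-α) * Real.log (γ^(1/α)))

noncomputable def hi (α γ : ℝ) : ℝ := Real.log 2 + max (u1 α γ) (u2 α γ)

variable {α : ℝ}

lemma prefac (hα1 : 1 < α) {γ : ℝ} (hγ : 0 < γ) :
    γ ^ (-(α-1)/α) = (γ^(1/α)) ^ ((1:ℝ)-α) := by
  rw [← Real.rpow_mul hγ.le]
  congr 1
  have hα0 : α ≠ 0 := by positivity
  field_simp
  ring

lemma K0x (hα1 : 1 < α) : Tendsto (fun x:ℝ => x ^ ((1:ℝ)-α)) atTop (𝓝 0) := by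
  apply (tendsto_rpow_neg_atTop (by linarith : 0 < α - 1)).congr
  intro x
  rw [show -(α-1) = (1:ℝ)-α by ring]

lemma K1x (hα1 : 1 < α) :
    Tendsto (fun x:ℝ => x ^ ((1:ℝ)-α) * Real.log x) atTop (𝓝 0) := by
  have h := (isLittleO_log_rpow_atTop (by linarith : 0 < α - 1)).tendsto_div_nhds_zero
  apply h.congr'
  filter_upwards [eventually_gt_atTop (0:ℝ)] with x hx
  rw [show (1:ℝ)-α = -(α-1) by ring, Real.rpow_neg hx.le]
  ring

lemma hc_top (hα1 : 1 < α) : Tendsto (fun γ:ℝ => γ ^ (1/α)) atTop atTop :=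
  tendsto_rpow_atTop (by positivity)

lemma K0 (hα1 : 1 < α) :
    Tendsto (fun γ:ℝ => (γ^(1/α)) ^ ((1:ℝ)-α)) atTop (𝓝 0) :=
  (K0x hα1).comp (hc_top hα1)

lemma K1 (hα1 : 1 < α) :
    Tendsto (fun γ:ℝ => (γ^(1/α)) ^ ((1:ℝ)-α) * Real.log (γ^(1/α))) atTop (𝓝 0) :=
  (K1x hα1).comp (hc_top hα1)

lemma K2 (hα1 : 1 < α) :
    Tendsto (fun γ:ℝ => 2 * (2*γ^(1/α)) ^ ((1:ℝ)-α) / (α-1)) atTop (𝓝 0) := by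
  have h2 : Tendsto (fun γ:ℝ => 2 * γ^(1/α)) atTop atTop :=
    (hc_top hα1).const_mul_atTop two_pos
  have h3 := ((K0x hα1).comp h2).const_mul (2:ℝ)
  have h4 := h3.div_const (α-1)
  simpa using h4

lemma K3 (hα1 : 1 < α) :
    Tendsto (fun γ:ℝ => (γ^(1/α)) ^ ((1:ℝ)-α) * (γ^(1/α)-1) ^ (α-1)) atTop (𝓝 1) := by
  have hinv : Tendsto (fun γ:ℝ => 1 - (γ^(1/α))⁻¹) atTop (𝓝 1) := by
    have h := tendsto_inv_atTop_zero.comp (hc_top hα1)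
    have h2 := (tendsto_const_nhds (x := (1:ℝ)) (f := atTop)).sub h
    simpa using h2
  have hcont : ContinuousAt (fun x:ℝ => x ^ (α-1)) 1 :=
    Real.continuousAt_rpow_const 1 (α-1) (Or.inl one_ne_zero)
  have h2 := hcont.tendsto.comp hinv
  rw [Real.one_rpow] at h2
  apply h2.congr'
  filter_upwards [(hc_top hα1).eventually_gt_atTop 1] with γ hγ1
  have hx0 : (0:ℝ) < γ^(1/α) := by linarith
  show (1 - (γ^(1/α))⁻¹) ^ (α-1) = _
  have h3 : 1 - (γ^(1/α))⁻¹ = (γ^(1/α) - 1) / (γ^(1/α)) := by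
    field_simp
  rw [h3, Real.div_rpow (by linarith) hx0.le,
    show (1:ℝ)-α = -(α-1) by ring, Real.rpow_neg hx0.le]
  rw [div_eq_mul_inv, mul_comm]

lemma T_lo (hα1 : 1 < α) :
    Tendsto (fun γ:ℝ => γ ^ (-(α-1)/α) * lo α γ) atTop (𝓝 (-α)) := by
  have base : Tendsto (fun γ:ℝ => (γ^(1/α)) ^ ((1:ℝ)-α) * lo α γ) atTop (𝓝 (-α)) := by
    have h := (K1 hα1).sub (tendsto_const_nhds (x := α) (f := atTop))
    rw [zero_sub] at h
    apply h.congr'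
    filter_upwards [eventually_gt_atTop (0:ℝ)] with γ hγ
    have hc0 : (0:ℝ) < γ^(1/α) := Real.rpow_pos_of_pos hγ _
    have hPP : (γ^(1/α))^((1:ℝ)-α) * (γ^(1/α))^(α-1) = 1 := by
      rw [← Real.rpow_add hc0]; norm_num
    unfold lo
    linear_combination α * hPP
  apply base.congr'
  filter_upwards [eventually_gt_atTop (0:ℝ)] with γ hγ
  rw [prefac hα1 hγ]

lemma T_u1 (hα1 : 1 < α) :
    Tendsto (fun γ:ℝ => (γ^(1/α)) ^ ((1:ℝ)-α) * u1 α γ) atTop (𝓝 (-α)) := by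
  have h := (K1 hα1).sub
    (((tendsto_const_nhds (x := (1:ℝ)) (f := atTop)).sub (K2 hα1)).const_mul α)
  have hval : (0:ℝ) - α * (1 - 0) = -α := by ring
  rw [hval] at h
  apply h.congr'
  filter_upwards [eventually_gt_atTop (0:ℝ)] with γ hγ
  have hc0 : (0:ℝ) < γ^(1/α) := Real.rpow_pos_of_pos hγ _
  have hPP : (γ^(1/α))^((1:ℝ)-α) * (γ^(1/α))^(α-1) = 1 := by
    rw [← Real.rpow_add hc0]; norm_num
  unfold u1
  linear_combination α * (1 - 2*(2*γ^(1/α))^((1:ℝ)-α)/(α-1)) * hPP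

lemma T_u2 (hα1 : 1 < α) :
    Tendsto (fun γ:ℝ => (γ^(1/α)) ^ ((1:ℝ)-α) * u2 α γ) atTop (𝓝 (-α)) := by
  have h := (((K3 hα1).const_mul α).neg).mul
    ((tendsto_const_nhds (x := (1:ℝ)) (f := atTop)).sub (K1 hα1))
  have hval : -(α * 1) * (1 - 0) = -α := by ring
  rw [hval] at h
  apply h.congr
  intro γ
  unfold u2
  ring

lemma T_hi (hα1 : 1 < α) :
    Tendsto (fun γ:ℝ => γ ^ (-(α-1)/α) * hi α γ) atTop (𝓝 (-α)) := by
  have base : Tendsto (fun γ:ℝ => (γ^(1/α)) ^ ((1:ℝ)-α) * hi α γ) atTop (𝓝 (-α)) := by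
    have hmax := (T_u1 hα1).max (T_u2 hα1)
    rw [max_self] at hmax
    have hlog2 := (K0 hα1).mul_const (Real.log 2)
    rw [zero_mul] at hlog2
    have h := hlog2.add hmax
    rw [zero_add] at h
    apply h.congr'
    filter_upwards [eventually_gt_atTop (0:ℝ)] with γ hγ
    have hc0 : (0:ℝ) < γ^(1/α) := Real.rpow_pos_of_pos hγ _
    have hnn : (0:ℝ) ≤ (γ^(1/α))^((1:ℝ)-α) := (Real.rpow_pos_of_pos hc0 _).le
    unfold hi
    rw [mul_add, mul_max_of_nonneg _ _ hnn]
  apply base.congr'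
  filter_upwards [eventually_gt_atTop (0:ℝ)] with γ hγ
  rw [prefac hα1 hγ]

end StableVAux

open StableVAux in
/-- for `α ∈ (1,2)`, if `v^0_1(γ) ∈ [0,γ^{1/α})` solves
`∫_0^{v^0_1(γ)} dy/(γ − y^α) = 1` and `v^∞_1(γ) ∈ (γ^{1/α},∞)` solves
`∫_{v^∞_1(γ)}^∞ dy/(y^α − γ) = 1`, then `v^∞_1(γ) − v^0_1(γ) > 0` and
`γ^{−(α−1)/α} log(v^∞_1(γ) − v^0_1(γ)) → −α` as `γ → ∞`. -/
theorem stable_v_difference_asymptotics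
    (α : ℝ) (hα1 : 1 < α) (hα2 : α < 2)
    (v0 vinf : ℝ → ℝ)
    (hv0 : ∀ γ > (0:ℝ), v0 γ ∈ Set.Ico 0 (γ ^ (1 / α)) ∧
      ∫ y in (0:ℝ)..v0 γ, (γ - y ^ α)⁻¹ = 1)
    (hvinf : ∀ γ > (0:ℝ), vinf γ ∈ Set.Ioi (γ ^ (1 / α)) ∧
      ∫ y in Set.Ioi (vinf γ), (y ^ α - γ)⁻¹ = 1) :
    (∀ γ > (0:ℝ), 0 < vinf γ - v0 γ) ∧
      Filter.Tendsto
        (fun γ : ℝ => γ ^ (-(α - 1) / α) * Real.log (vinf γ - v0 γ))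
        Filter.atTop (nhds (-α)) := by
  have hα0 : (0:ℝ) < α := by linarith
  have hαne : α ≠ 0 := ne_of_gt hα0
  constructor
  · intro γ hγ
    have h0 := (Set.mem_Ico.mp (hv0 γ hγ).1).2
    have h1 := Set.mem_Ioi.mp (hvinf γ hγ).1
    linarith
  · have hev : ∀ᶠ γ in atTop,
        lo α γ ≤ Real.log (vinf γ - v0 γ) ∧
        Real.log (vinf γ - v0 γ) ≤ hi α γ := by
      filter_upwards [eventually_gt_atTop (0:ℝ),
        (hc_top hα1).eventually_ge_atTop 2,
        (K1 hα1).eventually_lt_const one_pos,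
        (K2 hα1).eventually_lt_const one_pos] with γ hγ0 hc2 hK1lt hK2lt
      have hc0 : (0:ℝ) < γ^(1/α) := Real.rpow_pos_of_pos hγ0 _
      obtain ⟨hmem, hintv⟩ := hv0 γ hγ0
      obtain ⟨hv0n, hvlt⟩ := Set.mem_Ico.mp hmem
      obtain ⟨hwmem, hintw⟩ := hvinf γ hγ0
      have hwgt : γ^(1/α) < vinf γ := Set.mem_Ioi.mp hwmem
      have hcγ : (γ^(1/α)) ^ α = γ := by
        rw [← Real.rpow_mul (le_of_lt hγ0), one_div_mul_cancel hαne, Real.rpow_one]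
      have hintv' : ∫ y in (0:ℝ)..v0 γ, ((γ^(1/α))^α - y^α)⁻¹ = 1 := by
        rw [hcγ]; exact hintv
      have hintw' : ∫ y in Set.Ioi (vinf γ), (y^α - (γ^(1/α))^α)⁻¹ = 1 := by
        rw [hcγ]; exact hintw
      have hlower := log_lower hα1 hc0 hv0n hvlt hintv'
      have hcrude := log_upper_crude hα1 hc0 hv0n hvlt hintv'
      have hPP : (γ^(1/α))^((1:ℝ)-α) * (γ^(1/α))^(α-1) = 1 := by
        rw [← Real.rpow_add hc0]; norm_num
      have hclog : Real.log (γ^(1/α)) < (γ^(1/α))^(α-1) := by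
        have h1 : (γ^(1/α))^((1:ℝ)-α) * Real.log (γ^(1/α))
            < (γ^(1/α))^((1:ℝ)-α) * (γ^(1/α))^(α-1) := by
          rw [hPP]; exact hK1lt
        exact lt_of_mul_lt_mul_left h1 (le_of_lt (Real.rpow_pos_of_pos hc0 _))
      have hcv : 0 < γ^(1/α) - v0 γ := by linarith
      have hva : γ^(1/α) - 1 ≤ v0 γ := by
        have h1 : Real.log (γ^(1/α) - v0 γ) ≤ 0 := by linarith
        have h2 : γ^(1/α) - v0 γ ≤ 1 := by
          calc γ^(1/α) - v0 γ = Real.exp (Real.log (γ^(1/α) - v0 γ)) :=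
                (Real.exp_log hcv).symm
            _ ≤ Real.exp 0 := Real.exp_le_exp.mpr h1
            _ = 1 := Real.exp_zero
        linarith
      have hrefined := log_upper_refined hα1 hc2 hva hvlt hintv'
      have hvinfb := log_upper_vinf hα1 hc0 hwgt hintw' hK2lt
      have hwc : 0 < vinf γ - γ^(1/α) := by linarith
      have hL : 0 < vinf γ - v0 γ := by linarith
      constructor
      · refine le_trans ?_ (Real.log_le_log hcv (by linarith))
        exact hlower
      · have hexp1 : vinf γ - γ^(1/α) ≤ Real.exp (u1 α γ) := by
          rw [← Real.exp_log hwc]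
          exact Real.exp_le_exp.mpr hvinfb
        have hexp2 : γ^(1/α) - v0 γ ≤ Real.exp (u2 α γ) := by
          rw [← Real.exp_log hcv]
          exact Real.exp_le_exp.mpr hrefined
        have m1 : Real.exp (u1 α γ) ≤ Real.exp (max (u1 α γ) (u2 α γ)) :=
          Real.exp_le_exp.mpr (le_max_left _ _)
        have m2 : Real.exp (u2 α γ) ≤ Real.exp (max (u1 α γ) (u2 α γ)) :=
          Real.exp_le_exp.mpr (le_max_right _ _)
        have hsum : vinf γ - v0 γ ≤ 2 * Real.exp (max (u1 α γ) (u2 α γ)) := by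
          linarith
        have hlogup := Real.log_le_log hL hsum
        rw [Real.log_mul (by norm_num) (Real.exp_ne_zero _), Real.log_exp] at hlogup
        exact hlogup
    refine tendsto_of_tendsto_of_tendsto_of_le_of_le' (T_lo hα1) (T_hi hα1) ?_ ?_
    · filter_upwards [hev, eventually_ge_atTop (0:ℝ)] with γ h hγ0
      exact mul_le_mul_of_nonneg_left h.1 (Real.rpow_nonneg hγ0 _)
    · filter_upwards [hev, eventually_ge_atTop (0:ℝ)] with γ h hγ0
      exact mul_le_mul_of_nonneg_left h.2 (Real.rpow_nonneg hγ0 _)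
end

section
/- Let α ∈ (1,2) and fix r > 0. For λ > 0 let v^0_r(λ) ∈ [0, λ^{1/α}) be the unique solution of ∫_0^{v^0_r(λ)} dy/(λ − y^α) = r. Then 0 ≤ v^0_r(λ) ≤ λ r for all λ > 0, and lim_{λ→0+} v^0_r(λ)/λ = r. -/
/-!
On `[0, v]` the integrand `(λ - y ^ α)⁻¹` lies between `λ⁻¹` and `(λ - v ^ α)⁻¹`, so
`v / λ ≤ r ≤ v / (λ - v ^ α)` for `v = v^0_r(λ)`. The first inequality is `v ≤ λ r`; feeding it
into the second gives `r - r ^ (1 + α) λ ^ (α - 1) ≤ v / λ ≤ r`, and `λ ^ (α - 1) → 0` as `λ → 0+`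
because `α > 1`.
-/

open Set Filter MeasureTheory Topology

section
variable {α lam r v : ℝ}

lemma sub_rpow_pos_of_mem_Icc (hα : 0 ≤ α) (hv : v ^ α < lam) {y : ℝ} (hy : y ∈ Icc 0 v) :
    0 < lam - y ^ α :=
  sub_pos.2 <| (Real.rpow_le_rpow hy.1 hy.2 hα).trans_lt hv

lemma monotoneOn_inv_sub_rpow (hα : 0 ≤ α) (hv : v ^ α < lam) :
    MonotoneOn (fun y : ℝ => (lam - y ^ α)⁻¹) (Icc 0 v) := fun _ hx _ hy hxy =>
  inv_anti₀ (sub_rpow_pos_of_mem_Icc hα hv hy)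
    (sub_le_sub_left (Real.rpow_le_rpow hx.1 hxy hα) lam)

lemma integral_inv_sub_rpow_mem_Icc (hα : 0 ≤ α) (hv0 : 0 ≤ v) (hv : v ^ α < lam) :
    ∫ y in (0:ℝ)..v, (lam - y ^ α)⁻¹ ∈ Icc (v / lam) (v / (lam - v ^ α)) := by
  have hmono := monotoneOn_inv_sub_rpow hα hv
  have hint : IntervalIntegrable (fun y : ℝ => (lam - y ^ α)⁻¹) volume 0 v :=
    (uIcc_of_le hv0 ▸ hmono).intervalIntegrable
  constructor
  · have := intervalIntegral.integral_mono_on hv0 intervalIntegrable_const hint fun y hy =>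
      inv_anti₀ (sub_rpow_pos_of_mem_Icc hα hv hy) (sub_le_self lam (Real.rpow_nonneg hy.1 α))
    simpa [div_eq_mul_inv] using this
  · have := intervalIntegral.integral_mono_on hv0 hint intervalIntegrable_const fun y hy =>
      hmono hy ⟨hv0, le_rfl⟩ hy.2
    simpa [div_eq_mul_inv] using this

lemma le_mul_and_mul_sub_rpow_le_of_integral_eq (hα : 0 ≤ α) (hv0 : 0 ≤ v) (hv : v ^ α < lam)
    (h : ∫ y in (0:ℝ)..v, (lam - y ^ α)⁻¹ = r) : v ≤ lam * r ∧ r * (lam - v ^ α) ≤ v := by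
  have hlam : 0 < lam := (Real.rpow_nonneg hv0 α).trans_lt hv
  obtain ⟨hlow, hup⟩ := h ▸ integral_inv_sub_rpow_mem_Icc hα hv0 hv
  rw [div_le_iff₀ hlam] at hlow
  rw [le_div_iff₀ (sub_pos.2 hv)] at hup
  exact ⟨by linarith, hup⟩

lemma sub_mul_rpow_le_div (hα : 0 ≤ α) (hlam : 0 < lam) (hv0 : 0 ≤ v) (hvr : v ≤ lam * r)
    (hrv : r * (lam - v ^ α) ≤ v) : r - r * r ^ α * lam ^ (α - 1) ≤ v / lam := by
  have hr : 0 ≤ r := nonneg_of_mul_nonneg_right (hv0.trans hvr) hlam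
  have hvα : v ^ α ≤ lam ^ (α - 1) * lam * r ^ α := by
    calc v ^ α ≤ (lam * r) ^ α := Real.rpow_le_rpow hv0 hvr hα
      _ = lam ^ (α - 1) * lam * r ^ α := by
        rw [Real.mul_rpow hlam.le hr, ← Real.rpow_add_one hlam.ne', sub_add_cancel]
  rw [le_div_iff₀ hlam]
  nlinarith [mul_le_mul_of_nonneg_left hvα hr]

end

lemma tendsto_sub_mul_rpow_nhdsGT_zero {β : ℝ} (hβ : 0 < β) (r c : ℝ) :
    Tendsto (fun x : ℝ => r - c * x ^ β) (𝓝[>] 0) (𝓝 r) := by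
  have h := ((Real.continuous_rpow_const hβ.le).tendsto' 0 0 (Real.zero_rpow hβ.ne')).mono_left
    (nhdsWithin_le_nhds (s := Ioi 0))
  simpa using tendsto_const_nhds.sub (h.const_mul c)

theorem stable_v0_small_lambda_general
    (α r : ℝ) (hα1 : 1 < α)
    (v0 : ℝ → ℝ)
    (hv0 : ∀ lam > (0:ℝ), v0 lam ∈ Set.Ico 0 (lam ^ (1 / α)) ∧
      ∫ y in (0:ℝ)..v0 lam, (lam - y ^ α)⁻¹ = r) :
    (∀ lam > (0:ℝ), 0 ≤ v0 lam ∧ v0 lam ≤ lam * r) ∧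
      Filter.Tendsto (fun lam : ℝ => v0 lam / lam)
        (nhdsWithin 0 (Set.Ioi 0)) (nhds r) := by
  have hα : 0 < α := by linarith
  have hbounds : ∀ lam > (0:ℝ),
      0 ≤ v0 lam ∧ v0 lam ≤ lam * r ∧ r * (lam - v0 lam ^ α) ≤ v0 lam := by
    intro lam hlam
    obtain ⟨⟨hv0_nonneg, hv0_lt⟩, hint⟩ := hv0 lam hlam
    rw [one_div, Real.lt_rpow_inv_iff_of_pos hv0_nonneg hlam.le hα] at hv0_lt
    exact ⟨hv0_nonneg, le_mul_and_mul_sub_rpow_le_of_integral_eq hα.le hv0_nonneg hv0_lt hint⟩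
  refine ⟨fun lam hlam => ⟨(hbounds lam hlam).1, (hbounds lam hlam).2.1⟩, ?_⟩
  refine tendsto_of_tendsto_of_tendsto_of_le_of_le'
    (tendsto_sub_mul_rpow_nhdsGT_zero (sub_pos.2 hα1) r (r * r ^ α)) tendsto_const_nhds ?_ ?_
  · filter_upwards [self_mem_nhdsWithin] with lam (hlam : 0 < lam)
    obtain ⟨hv, hvr, hrv⟩ := hbounds lam hlam
    exact sub_mul_rpow_le_div hα.le hlam hv hvr hrv
  · filter_upwards [self_mem_nhdsWithin] with lam (hlam : 0 < lam)
    exact (div_le_iff₀ hlam).2 (by linarith [(hbounds lam hlam).2.1])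

/-- for fixed `r > 0`, the solution `v^0_r(λ)` of
`∫_0^{v^0_r(λ)} dy/(λ − y^α) = r` satisfies `0 ≤ v^0_r(λ) ≤ λ r` for all `λ > 0`
and `v^0_r(λ)/λ → r` as `λ → 0+`. -/
theorem stable_v0_small_lambda
    (α r : ℝ) (hα1 : 1 < α) (hα2 : α < 2) (hr : 0 < r)
    (v0 : ℝ → ℝ)
    (hv0 : ∀ lam > (0:ℝ), v0 lam ∈ Set.Ico 0 (lam ^ (1 / α)) ∧
      ∫ y in (0:ℝ)..v0 lam, (lam - y ^ α)⁻¹ = r) :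
    (∀ lam > (0:ℝ), 0 ≤ v0 lam ∧ v0 lam ≤ lam * r) ∧
      Filter.Tendsto (fun lam : ℝ => v0 lam / lam)
        (nhdsWithin 0 (Set.Ioi 0)) (nhds r) :=
  stable_v0_small_lambda_general α r hα1 v0 hv0
end

section
/- Let α ∈ (1,2). For λ > 0 and r ∈ [0,1] let v^0_r(λ) ∈ [0, λ^{1/α}) be the unique solution of ∫_0^{v^0_r(λ)} dy/(λ − y^α) = r. Then lim_{λ→0+} λ^{1−α} ∫_0^1 v^0_r(λ)^{α−1} dr = 1/α. -/
open Set Filter MeasureTheory Topology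

/-!
On `[0, v]` the integrand `(λ - y^α)⁻¹` lies between `λ⁻¹` and `(λ - v^α)⁻¹`, so the defining
equation `∫_0^v (λ - y^α)⁻¹ dy = r` forces `λ r (1 - λ^{α-1}) ≤ v ≤ λ r` for `v = v^0_r(λ)`.
Hence `λ^{1-α} (v^0_r(λ))^{α-1} = (v^0_r(λ)/λ)^{α-1}` is squeezed between
`((1 - λ^{α-1}) r)^{α-1}` and `r^{α-1}`, whose integrals over `r ∈ [0,1]` both tend to `1/α`.
Integrability in `r` comes from monotonicity: `r ↦ v^0_r(λ)` inverts a strictly increasing map.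
-/

section InvSubRpow

variable {α lam : ℝ}

lemma rpow_lt_of_lt_rpow_one_div (hα : 0 < α) (hlam : 0 ≤ lam) {y : ℝ} (hy : 0 ≤ y)
    (hylam : y < lam ^ (1 / α)) : y ^ α < lam :=
  (Real.lt_rpow_inv_iff_of_pos hy hlam hα).1 (by rwa [← one_div])

lemma intervalIntegrable_inv_sub_rpow (hα : 0 < α) (hlam : 0 ≤ lam) {a b : ℝ} (ha : 0 ≤ a)
    (hab : a ≤ b) (hb : b < lam ^ (1 / α)) :
    IntervalIntegrable (fun y => (lam - y ^ α)⁻¹) volume a b := by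
  refine ContinuousOn.intervalIntegrable ?_
  rw [uIcc_of_le hab]
  refine (continuousOn_const.sub fun y _ => ?_).inv₀ fun y hy => ?_
  · exact (Real.continuousAt_rpow_const y α (Or.inr hα.le)).continuousWithinAt
  · exact (sub_pos.2 (rpow_lt_of_lt_rpow_one_div hα hlam (ha.trans hy.1) (hy.2.trans_lt hb))).ne'

lemma strictMonoOn_integral_inv_sub_rpow (hα : 0 < α) (hlam : 0 ≤ lam) :
    StrictMonoOn (fun v => ∫ y in (0:ℝ)..v, (lam - y ^ α)⁻¹) (Ico 0 (lam ^ (1 / α))) := by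
  intro a ha b hb hab
  have hint : IntervalIntegrable (fun y => (lam - y ^ α)⁻¹) volume a b :=
    intervalIntegrable_inv_sub_rpow hα hlam ha.1 hab.le hb.2
  have hpos : 0 < ∫ y in a..b, (lam - y ^ α)⁻¹ :=
    intervalIntegral.intervalIntegral_pos_of_pos_on hint (fun y hy => inv_pos.2 <| sub_pos.2 <|
      rpow_lt_of_lt_rpow_one_div hα hlam (ha.1.trans hy.1.le) (hy.2.trans hb.2)) hab
  dsimp only
  rw [← intervalIntegral.integral_add_adjacent_intervals
    (intervalIntegrable_inv_sub_rpow hα hlam le_rfl ha.1 ha.2) hint]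
  exact lt_add_of_pos_right _ hpos

lemma div_le_integral_inv_sub_rpow (hα : 0 < α) (hlam : 0 < lam) {v : ℝ}
    (hv : v ∈ Ico 0 (lam ^ (1 / α))) : v / lam ≤ ∫ y in (0:ℝ)..v, (lam - y ^ α)⁻¹ := by
  have h := intervalIntegral.integral_mono_on hv.1 intervalIntegrable_const
    (intervalIntegrable_inv_sub_rpow hα hlam.le le_rfl hv.1 hv.2) fun y hy =>
      inv_anti₀ (sub_pos.2 (rpow_lt_of_lt_rpow_one_div hα hlam.le hy.1 (hy.2.trans_lt hv.2)))
        (sub_le_self _ (Real.rpow_nonneg hy.1 α))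
  simpa [div_eq_mul_inv] using h

lemma integral_inv_sub_rpow_le_div (hα : 0 < α) (hlam : 0 ≤ lam) {v : ℝ}
    (hv : v ∈ Ico 0 (lam ^ (1 / α))) : ∫ y in (0:ℝ)..v, (lam - y ^ α)⁻¹ ≤ v / (lam - v ^ α) := by
  have h := intervalIntegral.integral_mono_on hv.1
    (intervalIntegrable_inv_sub_rpow hα hlam le_rfl hv.1 hv.2) intervalIntegrable_const
    fun y hy =>
      inv_anti₀ (sub_pos.2 (rpow_lt_of_lt_rpow_one_div hα hlam hv.1 hv.2))
        (sub_le_sub_left (Real.rpow_le_rpow hy.1 hy.2 hα.le) lam)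
  simpa [div_eq_mul_inv] using h

lemma div_mem_Icc_of_integral_inv_sub_rpow_eq (hα : 0 < α) (hlam : 0 < lam) {r v : ℝ}
    (hr : r ∈ Icc (0:ℝ) 1) (hv : v ∈ Ico 0 (lam ^ (1 / α)))
    (hvr : ∫ y in (0:ℝ)..v, (lam - y ^ α)⁻¹ = r) :
    v / lam ∈ Icc ((1 - lam ^ (α - 1)) * r) r := by
  have hv_le : v / lam ≤ r := hvr ▸ div_le_integral_inv_sub_rpow hα hlam hv
  refine ⟨?_, hv_le⟩
  have hsub : 0 < lam - v ^ α := sub_pos.2 (rpow_lt_of_lt_rpow_one_div hα hlam.le hv.1 hv.2)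
  have hr_le : r * (lam - v ^ α) ≤ v := by
    rw [← le_div_iff₀ hsub, ← hvr]
    exact integral_inv_sub_rpow_le_div hα hlam.le hv
  have hv_lam : v ≤ lam := (div_le_one hlam).1 (hv_le.trans hr.2)
  have hrv : r * v ^ α ≤ r * lam ^ (α - 1) * lam := by
    calc r * v ^ α ≤ r * lam ^ α := by gcongr; exacts [hr.1, hv.1]
      _ = r * lam ^ (α - 1) * lam := by rw [Real.rpow_sub_one hlam.ne']; field_simp
  rw [le_div_iff₀ hlam]
  linarith

lemma monotoneOn_of_integral_inv_sub_rpow_eq (hα : 0 < α) (hlam : 0 ≤ lam) {v : ℝ → ℝ}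
    {s : Set ℝ}
    (hv : ∀ r ∈ s, v r ∈ Ico 0 (lam ^ (1 / α)) ∧ ∫ y in (0:ℝ)..v r, (lam - y ^ α)⁻¹ = r) :
    MonotoneOn v s := fun r₁ h₁ r₂ h₂ h₁₂ => by
  rw [← (strictMonoOn_integral_inv_sub_rpow hα hlam).le_iff_le (hv r₁ h₁).1 (hv r₂ h₂).1]
  simpa only [(hv r₁ h₁).2, (hv r₂ h₂).2] using h₁₂

end InvSubRpow

lemma integral_rpow_mem_Icc_of_mem_Icc {p c : ℝ} (hp : 0 ≤ p) (hc : 0 ≤ c) {g : ℝ → ℝ}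
    (hg : MonotoneOn g (Icc 0 1)) (hgc : ∀ r ∈ Icc (0:ℝ) 1, g r ∈ Icc (c * r) r) :
    ∫ r in (0:ℝ)..1, g r ^ p ∈ Icc (c ^ p / (p + 1)) (1 / (p + 1)) := by
  have hg0 : ∀ r ∈ Icc (0:ℝ) 1, 0 ≤ g r := fun r hr => (mul_nonneg hc hr.1).trans (hgc r hr).1
  have hgp : IntervalIntegrable (fun r => g r ^ p) volume 0 1 := by
    refine MonotoneOn.intervalIntegrable ?_
    rw [uIcc_of_le zero_le_one]
    exact fun a ha b hb hab => Real.rpow_le_rpow (hg0 a ha) (hg ha hb hab) hp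
  have hrp : IntervalIntegrable (fun r : ℝ => r ^ p) volume 0 1 :=
    intervalIntegral.intervalIntegrable_rpow' (by linarith)
  have hint : ∫ r in (0:ℝ)..1, r ^ p = 1 / (p + 1) := by
    simp [integral_rpow (Or.inl (by linarith : (-1:ℝ) < p)),
      Real.zero_rpow (by linarith : p + 1 ≠ 0)]
  constructor
  · calc c ^ p / (p + 1) = ∫ r in (0:ℝ)..1, c ^ p * r ^ p := by
          rw [intervalIntegral.integral_const_mul, hint, mul_one_div]
      _ ≤ ∫ r in (0:ℝ)..1, g r ^ p :=
          intervalIntegral.integral_mono_on zero_le_one (hrp.const_mul _) hgp fun r hr => by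
            rw [← Real.mul_rpow hc hr.1]
            exact Real.rpow_le_rpow (mul_nonneg hc hr.1) (hgc r hr).1 hp
  · rw [← hint]
    exact intervalIntegral.integral_mono_on zero_le_one hgp hrp fun r hr =>
      Real.rpow_le_rpow (hg0 r hr) (hgc r hr).2 hp

lemma rpow_one_sub_mul_integral_mem_Icc {α lam : ℝ} (hα1 : 1 < α) (hlam : lam ∈ Ioo (0:ℝ) 1)
    {v : ℝ → ℝ}
    (hv : ∀ r ∈ Icc (0:ℝ) 1,
      v r ∈ Ico 0 (lam ^ (1 / α)) ∧ ∫ y in (0:ℝ)..v r, (lam - y ^ α)⁻¹ = r) :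
    lam ^ (1 - α) * ∫ r in (0:ℝ)..1, v r ^ (α - 1) ∈
      Icc ((1 - lam ^ (α - 1)) ^ (α - 1) / α) (1 / α) := by
  have hα : 0 < α := zero_lt_one.trans hα1
  have hlam0 : 0 < lam := hlam.1
  have hp : 0 ≤ α - 1 := by linarith
  have hscale : lam ^ (1 - α) * ∫ r in (0:ℝ)..1, v r ^ (α - 1) =
      ∫ r in (0:ℝ)..1, (v r / lam) ^ (α - 1) := by
    rw [← intervalIntegral.integral_const_mul]
    refine intervalIntegral.integral_congr fun r hr => ?_
    rw [uIcc_of_le zero_le_one] at hr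
    rw [Real.div_rpow (hv r hr).1.1 hlam0.le, show 1 - α = -(α - 1) by ring,
      Real.rpow_neg hlam0.le, inv_mul_eq_div]
  have hc : 0 ≤ 1 - lam ^ (α - 1) :=
    sub_nonneg.2 (Real.rpow_le_one hlam0.le hlam.2.le hp)
  have hmono : MonotoneOn (fun r => v r / lam) (Icc 0 1) :=
    fun a ha b hb hab =>
      div_le_div_of_nonneg_right (monotoneOn_of_integral_inv_sub_rpow_eq hα hlam0.le hv ha hb hab)
        hlam0.le
  rw [hscale]
  simpa only [sub_add_cancel] using integral_rpow_mem_Icc_of_mem_Icc hp hc hmono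
    fun r hr => div_mem_Icc_of_integral_inv_sub_rpow_eq hα hlam0 hr (hv r hr).1 (hv r hr).2

theorem stable_v0_integral_asymptotics_general
    (α : ℝ) (hα1 : 1 < α)
    (v0 : ℝ → ℝ → ℝ)
    (hv0 : ∀ lam > (0:ℝ), ∀ r ∈ Set.Icc (0:ℝ) 1,
      v0 r lam ∈ Set.Ico 0 (lam ^ (1 / α)) ∧
        ∫ y in (0:ℝ)..v0 r lam, (lam - y ^ α)⁻¹ = r) :
    Filter.Tendsto
      (fun lam : ℝ => lam ^ (1 - α) * ∫ r in (0:ℝ)..1, v0 r lam ^ (α - 1))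
      (nhdsWithin 0 (Set.Ioi 0)) (nhds (1 / α)) := by
  have hp : 0 < α - 1 := sub_pos.2 hα1
  have hlower : Tendsto (fun lam : ℝ => (1 - lam ^ (α - 1)) ^ (α - 1) / α) (𝓝[>] 0)
      (𝓝 (1 / α)) := by
    have hcont : ContinuousAt (fun lam : ℝ => (1 - lam ^ (α - 1)) ^ (α - 1) / α) 0 :=
      ((continuousAt_const.sub (Real.continuousAt_rpow_const 0 _ (Or.inr hp.le))).rpow_const
        (Or.inr hp.le)).div_const α
    simpa [Real.zero_rpow hp.ne'] using hcont.tendsto.mono_left nhdsWithin_le_nhds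
  have hbounds : ∀ᶠ lam in 𝓝[>] (0:ℝ), lam ^ (1 - α) * ∫ r in (0:ℝ)..1, v0 r lam ^ (α - 1) ∈
      Icc ((1 - lam ^ (α - 1)) ^ (α - 1) / α) (1 / α) := by
    filter_upwards [Ioo_mem_nhdsGT zero_lt_one] with lam hlam
    exact rpow_one_sub_mul_integral_mem_Icc hα1 hlam (hv0 lam hlam.1)
  exact tendsto_of_tendsto_of_tendsto_of_le_of_le' hlower tendsto_const_nhds
    (hbounds.mono fun _ h => h.1) (hbounds.mono fun _ h => h.2)

/-- `λ^{1−α} ∫_0^1 v^0_r(λ)^{α−1} dr → 1/α` as `λ → 0+`,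
where `v^0_r(λ)` is the solution of `∫_0^{v^0_r(λ)} dy/(λ − y^α) = r`. -/
theorem stable_v0_integral_asymptotics
    (α : ℝ) (hα1 : 1 < α) (hα2 : α < 2)
    (v0 : ℝ → ℝ → ℝ)
    (hv0 : ∀ lam > (0:ℝ), ∀ r ∈ Set.Icc (0:ℝ) 1,
      v0 r lam ∈ Set.Ico 0 (lam ^ (1 / α)) ∧
        ∫ y in (0:ℝ)..v0 r lam, (lam - y ^ α)⁻¹ = r) :
    Filter.Tendsto
      (fun lam : ℝ => lam ^ (1 - α) * ∫ r in (0:ℝ)..1, v0 r lam ^ (α - 1))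
      (nhdsWithin 0 (Set.Ioi 0)) (nhds (1 / α)) :=
  stable_v0_integral_asymptotics_general α hα1 v0 hv0
end

section
/- Let α ∈ (1,2) and let μ be a probability measure on [0,∞) whose Laplace transform L(λ) = ∫ e^{−λx} μ(dx) satisfies (1 − L(λ))/λ^{α−1} → 1 as λ → 0+ (i.e. L(λ) = 1 − λ^{α−1} + o(λ^{α−1}) as λ → 0). Then there exists a finite constant C such that μ([y,∞)) ≤ C y^{−(α−1)} for every y > 0. -/
open Set Filter MeasureTheory

/-- a Tauberian-type bound. If `μ` is a probability measure on
`[0,∞)` whose Laplace transform satisfies `L(λ) = 1 − λ^{α−1} + o(λ^{α−1})` as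
`λ → 0+`, then `μ([y,∞)) ≤ C y^{−(α−1)}` for some finite constant `C`. -/
theorem tauberian_tail_bound
    (α : ℝ) (hα1 : 1 < α) (hα2 : α < 2)
    (μ : Measure ℝ) [IsProbabilityMeasure μ]
    (hsupp : μ {x : ℝ | x < 0} = 0)
    (hlaplace : Filter.Tendsto
      (fun lam : ℝ => (1 - ∫ x, Real.exp (-lam * x) ∂μ) / lam ^ (α - 1))
      (nhdsWithin 0 (Set.Ioi 0)) (nhds 1)) :
    ∃ C : ℝ, ∀ y > (0:ℝ),
      (μ (Set.Ici y)).toReal ≤ C * y ^ (-(α - 1)) := by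
  set β := α - 1 with hβdef
  have hβ0 : 0 < β := by simp only [hβdef]; linarith
  have hae : ∀ᵐ x ∂μ, 0 ≤ x := by
    rw [ae_iff]
    convert hsupp using 2
    ext x; simp
  have hint : ∀ lam : ℝ, 0 < lam → Integrable (fun x => Real.exp (-lam * x)) μ := by
    intro lam hlam
    refine Integrable.mono' (integrable_const 1)
      (Continuous.aestronglyMeasurable (by continuity)) ?_
    filter_upwards [hae] with x hx
    rw [Real.norm_eq_abs, abs_of_pos (Real.exp_pos _), Real.exp_le_one_iff]
    nlinarith [mul_nonneg hlam.le hx]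
  have hc : (0:ℝ) < 1 - Real.exp (-1) := by
    have h : Real.exp (-1) < 1 := by
      rw [← Real.exp_zero]; exact Real.exp_lt_exp.mpr (by norm_num)
    linarith
  have key : ∀ y : ℝ, 0 < y → (1 - Real.exp (-1)) * (μ (Ici y)).toReal ≤
      1 - ∫ x, Real.exp (-(1/y) * x) ∂μ := by
    intro y hy
    have hlam : (0:ℝ) < 1/y := by positivity
    have h1 : (1:ℝ) - ∫ x, Real.exp (-(1/y)*x) ∂μ
        = ∫ x, (1 - Real.exp (-(1/y)*x)) ∂μ := by
      rw [integral_sub (integrable_const 1) (hint _ hlam), integral_const]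
      simp
    rw [h1]
    have hnn : 0 ≤ᵐ[μ] fun x => 1 - Real.exp (-(1/y)*x) := by
      filter_upwards [hae] with x hx
      have h2 : Real.exp (-(1/y)*x) ≤ 1 := by
        rw [Real.exp_le_one_iff]
        nlinarith [mul_nonneg hlam.le hx]
      simp only [Pi.zero_apply]
      linarith
    have hintsub : Integrable (fun x => 1 - Real.exp (-(1/y)*x)) μ :=
      (integrable_const 1).sub (hint _ hlam)
    have hIge : ∫ x in Ici y, (1 - Real.exp (-(1/y)*x)) ∂μ
        ≤ ∫ x, (1 - Real.exp (-(1/y)*x)) ∂μ :=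
      setIntegral_le_integral hintsub hnn
    refine le_trans ?_ hIge
    apply setIntegral_ge_of_const_le_real measurableSet_Ici (measure_ne_top μ _) ?_
      hintsub.integrableOn
    intro x hx
    have hxy : y ≤ x := hx
    have h3 : Real.exp (-(1/y)*x) ≤ Real.exp (-1) := by
      apply Real.exp_le_exp.mpr
      have h1y : (1:ℝ) ≤ (1/y) * x := by
        rw [div_mul_eq_mul_div, one_mul, le_div_iff₀ hy, one_mul]
        exact hxy
      linarith
    linarith
  have hev : ∀ᶠ lam in nhdsWithin 0 (Ioi 0),
      (1 - ∫ x, Real.exp (-lam * x) ∂μ) / lam ^ β < 2 :=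
    hlaplace.eventually_lt_const (by norm_num)
  rw [eventually_nhdsWithin_iff, Metric.eventually_nhds_iff] at hev
  obtain ⟨δ, hδ, hδ2⟩ := hev
  refine ⟨max (2 / (1 - Real.exp (-1))) (δ⁻¹ ^ β), ?_⟩
  intro y hy
  have hypow : (0:ℝ) < y ^ β := Real.rpow_pos_of_pos hy _
  have hyneg : y ^ (-β) = (y ^ β)⁻¹ := Real.rpow_neg hy.le _
  rcases le_or_gt y δ⁻¹ with hyle | hygt
  · have h1 : (μ (Ici y)).toReal ≤ 1 := by
      have := measure_mono (μ := μ) (subset_univ (Ici y))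
      have h2 : (μ (Ici y)).toReal ≤ (μ univ).toReal :=
        ENNReal.toReal_mono (measure_ne_top μ _) this
      simpa using h2
    have h3 : y ^ β ≤ δ⁻¹ ^ β := Real.rpow_le_rpow hy.le hyle hβ0.le
    calc (μ (Ici y)).toReal ≤ 1 := h1
      _ ≤ δ⁻¹ ^ β * y ^ (-β) := by
          rw [hyneg, ← mul_inv_cancel₀ hypow.ne']
          exact mul_le_mul_of_nonneg_right h3 (by positivity)
      _ ≤ max (2 / (1 - Real.exp (-1))) (δ⁻¹ ^ β) * y ^ (-β) := by
          apply mul_le_mul_of_nonneg_right (le_max_right _ _) (by positivity)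
  · -- large y : 1/y < δ
    have hly : (0:ℝ) < 1/y := by positivity
    have hlt : 1/y < δ := by
      rw [div_lt_iff₀ hy]
      nlinarith [mul_lt_mul_of_pos_left hygt hδ, mul_inv_cancel₀ hδ.ne']
    have hmem := hδ2 (show dist (1/y) 0 < δ by
      simpa [Real.dist_eq, abs_of_pos hy] using hlt) hly
    have hdenpos : (0:ℝ) < (1/y) ^ β := Real.rpow_pos_of_pos hly _
    rw [div_lt_iff₀ hdenpos] at hmem
    have h4 : (1/y) ^ β = y ^ (-β) := by
      rw [one_div, Real.inv_rpow hy.le, hyneg]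
    have h5 : (1 - Real.exp (-1)) * (μ (Ici y)).toReal ≤ 2 * y ^ (-β) := by
      calc (1 - Real.exp (-1)) * (μ (Ici y)).toReal
          ≤ 1 - ∫ x, Real.exp (-(1/y) * x) ∂μ := key y hy
        _ ≤ 2 * (1/y) ^ β := hmem.le
        _ = 2 * y ^ (-β) := by rw [h4]
    have h6 : (μ (Ici y)).toReal ≤ (2 / (1 - Real.exp (-1))) * y ^ (-β) := by
      rw [div_mul_eq_mul_div, le_div_iff₀ hc]
      linarith [h5]
    calc (μ (Ici y)).toReal ≤ (2 / (1 - Real.exp (-1))) * y ^ (-β) := h6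
      _ ≤ max (2 / (1 - Real.exp (-1))) (δ⁻¹ ^ β) * y ^ (-β) := by
          apply mul_le_mul_of_nonneg_right (le_max_left _ _) (by positivity)
end

section
/- Let α ∈ (1,2) and r > 0, and let μ be a probability measure on (0,∞) whose Laplace transform satisfies ∫ e^{−λx} μ(dx) = 1 − (1 + λ^{1−α}/((α−1)r))^{1/(1−α)} for every λ > 0. Then there exists a finite constant C_α depending only on α (one may take C_α = e·(α−1)^{−2}) such that μ((0,b]) ≤ C_α r^{−1} b^{α−1} for every b > 0. -/
open Filter MeasureTheory Set

/-- if `μ` is a probability measure on `(0,∞)` with Laplace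
transform `1 − (1 + λ^{1−α}/((α−1)r))^{1/(1−α)}`, then
`μ((0,b]) ≤ C_α r^{−1} b^{α−1}` with `C_α = e (α−1)^{−2}`. -/
theorem stable_local_time_small_mass_bound
    (α r : ℝ) (hα1 : 1 < α) (hα2 : α < 2) (hr : 0 < r)
    (μ : Measure ℝ) [IsProbabilityMeasure μ]
    (hsupp : μ {x : ℝ | x ≤ 0} = 0)
    (hlaplace : ∀ lam > (0:ℝ),
      ∫ x, Real.exp (-lam * x) ∂μ =
        1 - (1 + lam ^ (1 - α) / ((α - 1) * r)) ^ (1 / (1 - α))) :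
    ∃ C : ℝ, C = Real.exp 1 * ((α - 1) ^ 2)⁻¹ ∧
      ∀ b > (0:ℝ), μ (Set.Ioc 0 b) ≤ ENNReal.ofReal (C * r⁻¹ * b ^ (α - 1)) := by
  refine ⟨Real.exp 1 * ((α - 1) ^ 2)⁻¹, rfl, ?_⟩
  intro b hb
  have hα1' : (0:ℝ) < α - 1 := by linarith
  set lam : ℝ := b⁻¹ with hlam
  have hlampos : 0 < lam := inv_pos.mpr hb
  set f : ℝ → ℝ := fun x => Real.exp (-lam * x) with hf
  -- a.e. positivity of x
  have hae : ∀ᵐ x ∂μ, 0 < x := by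
    rw [ae_iff]
    simpa using hsupp
  -- integrability
  have hint : Integrable f μ := by
    refine Integrable.mono' (integrable_const 1) ?_ ?_
    · exact (Real.continuous_exp.comp (continuous_const.mul continuous_id)).aestronglyMeasurable
    · filter_upwards [hae] with x hx
      rw [Real.norm_eq_abs, abs_of_pos (Real.exp_pos _)]
      exact Real.exp_le_one_iff.mpr (by nlinarith)
  have hfnn : 0 ≤ᵐ[μ] f := Eventually.of_forall fun x => (Real.exp_pos _).le
  -- lower bound on the integral
  have h1 : Real.exp (-1) * (μ (Set.Ioc 0 b)).toReal ≤ ∫ x, f x ∂μ := by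
    calc Real.exp (-1) * (μ (Set.Ioc 0 b)).toReal
        ≤ ∫ x in Set.Ioc 0 b, f x ∂μ := by
          refine setIntegral_ge_of_const_le_real measurableSet_Ioc (measure_ne_top μ _) ?_
            hint.integrableOn
          intro x hx
          apply Real.exp_le_exp.mpr
          rw [neg_mul]
          have : lam * x ≤ 1 := by
            calc lam * x ≤ lam * b := by
                  exact mul_le_mul_of_nonneg_left hx.2 hlampos.le
              _ = 1 := inv_mul_cancel₀ hb.ne'
          linarith
      _ ≤ ∫ x, f x ∂μ := setIntegral_le_integral hint hfnn
  -- compute the integral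
  set u : ℝ := b ^ (α - 1) / ((α - 1) * r) with hu
  have hupos : 0 < u := div_pos (Real.rpow_pos_of_pos hb _) (mul_pos hα1' hr)
  have hlamrpow : lam ^ (1 - α) = b ^ (α - 1) := by
    rw [hlam, Real.inv_rpow hb.le, ← Real.rpow_neg hb.le]
    congr 1
    ring
  set β : ℝ := (α - 1)⁻¹ with hβ
  have hβ1 : 1 ≤ β := by
    rw [hβ, le_inv_comm₀ one_pos hα1']
    simpa using by linarith
  have hβpos : 0 < β := lt_of_lt_of_le one_pos hβ1
  have hexp : (1 / (1 - α)) = -β := by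
    rw [hβ, one_div, show (1:ℝ) - α = -(α - 1) by ring, inv_neg]
  have h2 : ∫ x, f x ∂μ = 1 - ((1 + u) ^ β)⁻¹ := by
    rw [hf]
    simp only
    rw [hlaplace lam hlampos, hlamrpow, ← hu, hexp,
      Real.rpow_neg (by positivity)]
  -- Bernoulli
  have h3 : 1 - ((1 + u) ^ β)⁻¹ ≤ β * u := by
    have h1u : (0:ℝ) < 1 + u := by linarith
    have hB := one_add_mul_self_le_rpow_one_add (s := -(u / (1 + u)))
      (by
        have : u / (1 + u) ≤ 1 := by rw [div_le_one h1u]; linarith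
        linarith) hβ1
    have hveq : 1 + -(u / (1 + u)) = (1 + u)⁻¹ := by
      field_simp
      ring
    rw [hveq, Real.inv_rpow h1u.le] at hB
    have hfrac : u / (1 + u) ≤ u := by
      rw [div_le_iff₀ h1u]; nlinarith
    nlinarith [mul_le_mul_of_nonneg_left hfrac hβpos.le]
  -- put it together
  have hCnn : (0:ℝ) ≤ Real.exp 1 * ((α - 1) ^ 2)⁻¹ * r⁻¹ * b ^ (α - 1) := by
    positivity
  rw [ENNReal.le_ofReal_iff_toReal_le (measure_ne_top μ _) hCnn]
  have h7 : (μ (Set.Ioc 0 b)).toReal ≤ Real.exp 1 * (β * u) := by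
    have := h1.trans (h2 ▸ h3)
    have he : Real.exp (-1) = (Real.exp 1)⁻¹ := by
      rw [Real.exp_neg]
    rw [he, mul_comm] at this
    calc (μ (Set.Ioc 0 b)).toReal
        = Real.exp 1 * ((μ (Set.Ioc 0 b)).toReal * (Real.exp 1)⁻¹) := by
          field_simp
      _ ≤ Real.exp 1 * (β * u) :=
          mul_le_mul_of_nonneg_left this (Real.exp_pos 1).le
  refine h7.trans (le_of_eq ?_)
  rw [hβ, hu]
  field_simp
end
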